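/- arXiv:2112.14413 — 8 statements merged into one kernel-verified Lean document; each statement's English description precedes it below -/
import Mathlib

section
/- Let A = (a_{ij}) be a real m×n matrix, 1 ≤ p ≤ 2 and p ≤ q ≤ ∞. Then the square root of the operator norm of the Hadamard product A∘A (entrywise squares a_{ij}^2) from ℓ_{p/2}^n to ℓ_{q/2}^m equals max_{j≤n} ‖(a_{ij})_{i≤m}‖_q. -/
open MeasureTheory ProbabilityTheory
open scoped ENNReal

/-- The ℓ_p (quasi-)norm on ℝ^n, for p ∈ (0,∞]. -/
noncomputable def lpNorm (p : ℝ≥0∞) {n : ℕ} (x : Fin n → ℝ) : ℝ :=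
  if p = ⊤ then ⨆ j, |x j| else (∑ j, |x j| ^ p.toReal) ^ (1 / p.toReal)

/-- The operator (quasi-)norm of a matrix `B` acting from ℓ_p^n to ℓ_q^m. -/
noncomputable def opNorm (p q : ℝ≥0∞) {m n : ℕ} (B : Fin m → Fin n → ℝ) : ℝ :=
  sSup {c | ∃ x : Fin n → ℝ, lpNorm p x ≤ 1 ∧ c = lpNorm q (fun i => ∑ j, B i j * x j)}

/-! For `0 < s ≤ 1` and `s ≤ r`, the operator quasi-norm of a matrix `B` from `ℓ_s` to `ℓ_r` is
its largest column norm: unit vectors give the lower bound, and for the upper bound the unit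
ball of `ℓ_s` lies in that of `ℓ_ρ`, `ρ = min 1 r`, while `‖·‖_r ^ ρ` is subadditive, so that
`‖B x‖_r ^ ρ ≤ ∑ⱼ |xⱼ| ^ ρ ‖Bⱼ‖_r ^ ρ`. For `B = A ∘ A`, `s = p/2`, `r = q/2` the column norms are
`‖Aⱼ‖_q ^ 2`. -/

theorem Real.rpow_sum_le_sum_rpow {ι : Type*} (s : Finset ι) {f : ι → ℝ} (hf : ∀ i, 0 ≤ f i)
    {r : ℝ} (hr0 : 0 < r) (hr1 : r ≤ 1) : (∑ i ∈ s, f i) ^ r ≤ ∑ i ∈ s, f i ^ r := by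
  lift f to ι → NNReal using hf
  dsimp only
  exact_mod_cast Finset.le_sum_of_subadditive (fun x : NNReal => x ^ r)
    (NNReal.zero_rpow hr0.ne').le (fun x y => NNReal.rpow_add_le_add_rpow x y hr0.le hr1) s f

theorem sum_abs_rpow_le_one_of_le {ι : Type*} [Fintype ι] {x : ι → ℝ} {s t : ℝ} (hs : 0 < s)
    (hst : s ≤ t) (hx : ∑ j, |x j| ^ s ≤ 1) : ∑ j, |x j| ^ t ≤ 1 := by
  have hx_le_one (j : ι) : |x j| ≤ 1 := by
    by_contra! hj
    have : 1 < ∑ j, |x j| ^ s :=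
      (Real.one_lt_rpow hj hs).trans_le (Finset.single_le_sum (f := fun j => |x j| ^ s)
        (fun j _ => by positivity) (Finset.mem_univ j))
    linarith
  calc ∑ j, |x j| ^ t ≤ ∑ j, |x j| ^ s := Finset.sum_le_sum fun j _ =>
        Real.rpow_le_rpow_of_exponent_ge' (abs_nonneg _) (hx_le_one j) hs.le hst
    _ ≤ 1 := hx

section lpNorm

variable {n : ℕ}

theorem lpNorm_nonneg (p : ℝ≥0∞) (x : Fin n → ℝ) : 0 ≤ lpNorm p x := by
  unfold _root_.lpNorm
  split
  · exact Real.iSup_nonneg fun j => abs_nonneg _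
  · positivity

theorem lpNorm_eq_norm_toLp {p : ℝ≥0∞} (hp : p ≠ 0) (x : Fin n → ℝ) :
    lpNorm p x = ‖WithLp.toLp p x‖ := by
  unfold _root_.lpNorm
  split_ifs with hpt
  · subst hpt; simp [PiLp.norm_eq_ciSup]
  · simp [PiLp.norm_eq_sum (ENNReal.toReal_pos hp hpt)]

theorem lpNorm_rpow_toReal {p : ℝ≥0∞} (hp : 0 < p.toReal) (x : Fin n → ℝ) :
    lpNorm p x ^ p.toReal = ∑ j, |x j| ^ p.toReal := by
  rw [_root_.lpNorm, if_neg (ENNReal.toReal_pos_iff.1 hp).2.ne, ← Real.rpow_mul (by positivity),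
    one_div_mul_cancel hp.ne', Real.rpow_one]

theorem lpNorm_le_iff {p : ℝ≥0∞} (hp : 0 < p.toReal) {x : Fin n → ℝ} {M : ℝ} (hM : 0 ≤ M) :
    lpNorm p x ≤ M ↔ ∑ j, |x j| ^ p.toReal ≤ M ^ p.toReal := by
  rw [← lpNorm_rpow_toReal hp, Real.rpow_le_rpow_iff (lpNorm_nonneg p x) hM hp]

theorem lpNorm_zero {p : ℝ≥0∞} (hp : p ≠ 0) : lpNorm p (0 : Fin n → ℝ) = 0 := by
  unfold _root_.lpNorm
  split_ifs with hpt
  · simp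
  · have hp' := ENNReal.toReal_pos hp hpt
    simp [Real.zero_rpow hp'.ne', Real.zero_rpow (inv_pos.2 hp').ne']

theorem lpNorm_single_one {p : ℝ≥0∞} (hp : p ≠ 0) (j : Fin n) :
    lpNorm p (Pi.single j 1) = 1 := by
  unfold _root_.lpNorm
  split_ifs with hpt
  · have : Nonempty (Fin n) := ⟨j⟩
    refine le_antisymm (ciSup_le fun i => ?_) (le_ciSup_of_le (Set.finite_range _).bddAbove j ?_)
    · by_cases hi : i = j <;> simp [hi]
    · simp
  · have hp' := ENNReal.toReal_pos hp hpt
    rw [Fintype.sum_eq_single j fun i hi => by simp [hi, Real.zero_rpow hp'.ne']]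
    simp

theorem lpNorm_div_two_fun_sq {q : ℝ≥0∞} (hq : q ≠ 0) (v : Fin n → ℝ) :
    lpNorm (q / 2) (fun i => v i ^ 2) = lpNorm q v ^ 2 := by
  by_cases hqt : q = ⊤
  · subst hqt
    simp only [_root_.lpNorm, ENNReal.top_div_of_ne_top ENNReal.ofNat_ne_top, if_true, abs_pow]
    exact (Real.iSup_pow_of_ne_zero (fun i => abs_nonneg (v i)) two_ne_zero).symm
  · have ht := ENNReal.toReal_pos hq hqt
    have ht2 : 0 < (q / 2).toReal := by rw [ENNReal.toReal_div]; simp [ht]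
    rw [← Real.rpow_left_inj (lpNorm_nonneg _ _) (by positivity) ht2.ne', lpNorm_rpow_toReal ht2,
      ← Real.rpow_natCast, ← Real.rpow_mul (lpNorm_nonneg _ _), ENNReal.toReal_div,
      ENNReal.toReal_ofNat, Nat.cast_ofNat, mul_div_cancel₀ _ two_ne_zero, lpNorm_rpow_toReal ht]
    refine Finset.sum_congr rfl fun i _ => ?_
    rw [abs_pow, ← Real.rpow_natCast, ← Real.rpow_mul (abs_nonneg _), Nat.cast_ofNat,
      mul_div_cancel₀ _ two_ne_zero]

end lpNorm

section opNorm

variable {m n : ℕ}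

theorem lpNorm_mulVec_le_of_one_le {r : ℝ≥0∞} (hr : 1 ≤ r) (B : Fin m → Fin n → ℝ)
    {x : Fin n → ℝ} {M : ℝ} (hM : 0 ≤ M) (hB : ∀ j, lpNorm r (fun i => B i j) ≤ M)
    (hx : ∑ j, |x j| ≤ 1) : lpNorm r (fun i => ∑ j, B i j * x j) ≤ M := by
  have : Fact (1 ≤ r) := ⟨hr⟩
  have hr0 : r ≠ 0 := (zero_lt_one.trans_le hr).ne'
  have hsum : (fun i => ∑ j, B i j * x j) = ∑ j, x j • fun i => B i j := by
    ext i; simp [mul_comm]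
  calc lpNorm r (fun i => ∑ j, B i j * x j)
      = ‖∑ j, x j • WithLp.toLp r (fun i => B i j)‖ := by
        rw [lpNorm_eq_norm_toLp hr0, hsum, WithLp.toLp_sum]; simp
    _ ≤ ∑ j, |x j| * lpNorm r (fun i => B i j) :=
        (norm_sum_le _ _).trans_eq (by simp [norm_smul, lpNorm_eq_norm_toLp hr0])
    _ ≤ ∑ j, |x j| * M := by gcongr with j; exact hB j
    _ = M * ∑ j, |x j| := by rw [Finset.mul_sum]; simp [mul_comm]
    _ ≤ M := mul_le_of_le_one_right hM hx

theorem lpNorm_mulVec_le_of_toReal_lt_one {r : ℝ≥0∞} (hr0 : 0 < r.toReal) (hr1 : r.toReal < 1)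
    (B : Fin m → Fin n → ℝ) {x : Fin n → ℝ} {M : ℝ} (hM : 0 ≤ M)
    (hB : ∀ j, lpNorm r (fun i => B i j) ≤ M) (hx : ∑ j, |x j| ^ r.toReal ≤ 1) :
    lpNorm r (fun i => ∑ j, B i j * x j) ≤ M := by
  set t := r.toReal
  rw [lpNorm_le_iff hr0 hM]
  calc ∑ i, |∑ j, B i j * x j| ^ t ≤ ∑ i, (∑ j, |B i j * x j|) ^ t := by
        gcongr with i; exact Finset.abs_sum_le_sum_abs _ _
    _ ≤ ∑ i, ∑ j, |B i j * x j| ^ t := by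
        gcongr with i; exact Real.rpow_sum_le_sum_rpow _ (fun j => abs_nonneg _) hr0 hr1.le
    _ = ∑ j, |x j| ^ t * ∑ i, |B i j| ^ t := by
        rw [Finset.sum_comm]
        simp [abs_mul, Real.mul_rpow, Finset.mul_sum, mul_comm]
    _ ≤ ∑ j, |x j| ^ t * M ^ t := by
        gcongr with j; exact (lpNorm_le_iff hr0 hM).1 (hB j)
    _ = M ^ t * ∑ j, |x j| ^ t := by rw [Finset.mul_sum]; simp [mul_comm]
    _ ≤ M ^ t := mul_le_of_le_one_right (by positivity) hx

theorem lpNorm_mulVec_le_of_lpNorm_le_one {s : ℝ} (hs0 : 0 < s) (hs1 : s ≤ 1) {r : ℝ≥0∞}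
    (hsr : ENNReal.ofReal s ≤ r) (B : Fin m → Fin n → ℝ) {x : Fin n → ℝ} {M : ℝ} (hM : 0 ≤ M)
    (hB : ∀ j, lpNorm r (fun i => B i j) ≤ M) (hx : lpNorm (ENNReal.ofReal s) x ≤ 1) :
    lpNorm r (fun i => ∑ j, B i j * x j) ≤ M := by
  have hx' : ∑ j, |x j| ^ s ≤ 1 := by
    simpa [ENNReal.toReal_ofReal hs0.le] using
      (lpNorm_le_iff (by rwa [ENNReal.toReal_ofReal hs0.le]) zero_le_one).1 hx
  rcases le_or_gt 1 r with hr | hr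
  · exact lpNorm_mulVec_le_of_one_le hr B hM hB
      (by simpa using sum_abs_rpow_le_one_of_le hs0 hs1 hx')
  · have hsr' : s ≤ r.toReal := (ENNReal.ofReal_le_iff_le_toReal hr.ne_top).1 hsr
    have hr1 : r.toReal < 1 := by simpa using ENNReal.toReal_strict_mono ENNReal.one_ne_top hr
    exact lpNorm_mulVec_le_of_toReal_lt_one (hs0.trans_le hsr') hr1 B hM hB
      (sum_abs_rpow_le_one_of_le hs0 hsr' hx')

theorem opNorm_ofReal_eq_iSup_lpNorm {s : ℝ} (hs0 : 0 < s) (hs1 : s ≤ 1) {r : ℝ≥0∞}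
    (hsr : ENNReal.ofReal s ≤ r) (B : Fin m → Fin n → ℝ) :
    opNorm (ENNReal.ofReal s) r B = ⨆ j, lpNorm r (fun i => B i j) := by
  have hs : ENNReal.ofReal s ≠ 0 := (ENNReal.ofReal_pos.2 hs0).ne'
  have hr : r ≠ 0 := ((ENNReal.ofReal_pos.2 hs0).trans_le hsr).ne'
  refine IsGreatest.csSup_eq ⟨?_, ?_⟩
  · cases isEmpty_or_nonempty (Fin n)
    · refine ⟨0, by rw [_root_.lpNorm_zero hs]; exact zero_le_one, ?_⟩
      simp only [Finset.univ_eq_empty, Finset.sum_empty, Real.iSup_of_isEmpty]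
      exact (_root_.lpNorm_zero hr).symm
    · obtain ⟨j, hj⟩ := exists_eq_ciSup_of_finite (f := fun j => lpNorm r fun i => B i j)
      refine ⟨Pi.single j 1, (lpNorm_single_one hs j).le, ?_⟩
      simp [Pi.single_apply, hj]
  · rintro _ ⟨x, hx, rfl⟩
    exact lpNorm_mulVec_le_of_lpNorm_le_one hs0 hs1 hsr B
      (Real.iSup_nonneg fun j => lpNorm_nonneg _ _)
      (fun j => le_ciSup (f := fun j => lpNorm r fun i => B i j) (Finite.bddAbove_range _) j) hx

end opNorm

theorem stmt1 (m n : ℕ) (A : Fin m → Fin n → ℝ) (p : ℝ) (q : ℝ≥0∞)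
    (hp1 : 1 ≤ p) (hp2 : p ≤ 2) (hpq : ENNReal.ofReal p ≤ q) :
    Real.sqrt (opNorm (ENNReal.ofReal (p / 2)) (q / 2) (fun i j => A i j ^ 2)) =
      ⨆ j : Fin n, lpNorm q (fun i => A i j) := by
  have hq : q ≠ 0 := ((ENNReal.ofReal_pos.2 (by linarith)).trans_le hpq).ne'
  have hpq2 : ENNReal.ofReal (p / 2) ≤ q / 2 := by
    rw [ENNReal.ofReal_div_of_pos two_pos, ENNReal.ofReal_ofNat]
    exact ENNReal.div_le_div_right hpq 2
  rw [opNorm_ofReal_eq_iSup_lpNorm (by linarith) (by linarith) hpq2]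
  simp only [lpNorm_div_two_fun_sq hq]
  rw [← Real.iSup_pow_of_ne_zero (fun j => lpNorm_nonneg _ _) two_ne_zero,
    Real.sqrt_sq (Real.iSup_nonneg fun j => lpNorm_nonneg _ _)]
end

section
/- Fix 1 ≤ p ≤ ∞ and n ∈ ℕ. Let K be the convex hull of all vectors of the form |J|^{-1/p} (ε_j 1_{j∈J})_{j=1}^n, where J ranges over non-empty subsets of {1,…,n} and ε ∈ {−1,1}^n. Then B_p^n ⊆ (ln(en))^{1/p*} K, where p* is the Hölder conjugate of p. -/
open MeasureTheory ProbabilityTheory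
open scoped ENNReal Pointwise

/-- The polytope `K`: convex hull of the vectors `|J|^{-1/p} (ε_j 1_{j ∈ J})_j`
over nonempty `J ⊆ {1,…,n}` and signs `ε ∈ {-1,1}^n`. -/
noncomputable def Kset (p : ℝ≥0∞) (n : ℕ) : Set (Fin n → ℝ) :=
  convexHull ℝ { x | ∃ (J : Finset (Fin n)) (ε : Fin n → ℝ), J.Nonempty ∧
    (∀ j, ε j = 1 ∨ ε j = -1) ∧
    ∀ j, x j = (J.card : ℝ) ^ (-(1 / p.toReal)) * (if j ∈ J then ε j else 0) }

theorem Convex.sum_smul_mem_of_sum_le_one {E ι : Type*} [AddCommGroup E] [Module ℝ E]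
    {s : Set E} (hs : Convex ℝ s) (h₀ : (0 : E) ∈ s) {t : Finset ι} {w : ι → ℝ} {z : ι → E}
    (hw₀ : ∀ i ∈ t, 0 ≤ w i) (hw₁ : ∑ i ∈ t, w i ≤ 1) (hz : ∀ i ∈ t, z i ∈ s) :
    ∑ i ∈ t, w i • z i ∈ s := by
  set c := ∑ i ∈ t, w i
  rcases (Finset.sum_nonneg hw₀).eq_or_lt with hc | hc
  · rw [Finset.sum_eq_zero fun i hi => by
      rw [(Finset.sum_eq_zero_iff_of_nonneg hw₀).1 hc.symm i hi, zero_smul]]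
    exact h₀
  · have hmem : ∑ i ∈ t, (w i / c) • z i ∈ s :=
      hs.sum_mem (fun i hi => div_nonneg (hw₀ i hi) hc.le)
        (by rw [← Finset.sum_div, div_self hc.ne']) hz
    convert hs.smul_mem_of_zero_mem h₀ hmem ⟨hc.le, hw₁⟩ using 1
    rw [Finset.smul_sum]
    refine Finset.sum_congr rfl fun i _ => ?_
    rw [smul_smul, mul_div_cancel₀ _ hc.ne']

theorem Finset.sum_range_sub_mul_eq {R : Type*} [CommRing R] (a b : ℕ → R) (hb : b 0 = 0)
    (n : ℕ) :
    ∑ k ∈ Finset.range n, (a k - a (k + 1)) * b (k + 1) =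
      ∑ k ∈ Finset.range n, a k * (b (k + 1) - b k) - a n * b n := by
  induction n with
  | zero => simp [hb]
  | succ n ih => rw [Finset.sum_range_succ, Finset.sum_range_succ, ih]; ring

theorem Finset.sum_range_ite_sub_eq {G : Type*} [AddCommGroup G] (a : ℕ → G) {m n : ℕ}
    (hmn : m ≤ n) :
    ∑ k ∈ Finset.range n, (if m ≤ k then a k - a (k + 1) else 0) = a m - a n := by
  induction n, hmn using Nat.le_induction with
  | base => simp +contextual [Finset.sum_eq_zero, not_le.2 (Finset.mem_range.1 _)]
  | succ n hmn ih => rw [Finset.sum_range_succ, ih, if_pos hmn]; abel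

theorem Real.add_one_rpow_sub_rpow_le {t r : ℝ} (ht : 0 ≤ t) (hr : r ≤ 1) :
    (t + 1) ^ r - t ^ r ≤ (t + 1) ^ (r - 1) := by
  have ht1 : 0 < t + 1 := by linarith
  have hlow : t * (t + 1) ^ (r - 1) ≤ t ^ r := by
    rcases ht.eq_or_lt with rfl | ht
    · simpa using Real.rpow_nonneg le_rfl r
    · calc t * (t + 1) ^ (r - 1) ≤ t * t ^ (r - 1) :=
            mul_le_mul_of_nonneg_left (Real.rpow_le_rpow_of_nonpos ht (by linarith) (by linarith))
              ht.le
        _ = t ^ r := by rw [Real.rpow_sub_one ht.ne']; field_simp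
  have hsplit : (t + 1) ^ r = t * (t + 1) ^ (r - 1) + (t + 1) ^ (r - 1) := by
    rw [Real.rpow_sub_one ht1.ne']; field_simp
  linarith

theorem harmonic_le_log_exp_one_mul (n : ℕ) : (harmonic n : ℝ) ≤ Real.log (Real.exp 1 * n) := by
  rcases n.eq_zero_or_pos with rfl | hn
  · simp
  · rw [Real.log_mul (Real.exp_ne_zero 1) (by positivity), Real.log_exp]
    exact harmonic_le_one_add_log n

theorem sum_range_sub_mul_rpow_le {a : ℕ → ℝ} (ha : ∀ k, 0 ≤ a k) {r : ℝ} (hr₀ : 0 < r)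
    (hr₁ : r ≤ 1) (n : ℕ) :
    ∑ k ∈ Finset.range n, (a k - a (k + 1)) * ((k + 1 : ℕ) : ℝ) ^ r ≤
      ∑ k ∈ Finset.range n, a k * ((k + 1 : ℕ) : ℝ) ^ (r - 1) := by
  rw [Finset.sum_range_sub_mul_eq a (fun k => (k : ℝ) ^ r) (by simp [hr₀.ne']) n]
  have hterm : ∀ k ∈ Finset.range n, a k * (((k + 1 : ℕ) : ℝ) ^ r - (k : ℝ) ^ r) ≤
      a k * ((k + 1 : ℕ) : ℝ) ^ (r - 1) := fun k _ => by
    push_cast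
    exact mul_le_mul_of_nonneg_left (Real.add_one_rpow_sub_rpow_le k.cast_nonneg hr₁) (ha k)
  linarith [Finset.sum_le_sum hterm, mul_nonneg (ha n) (Real.rpow_nonneg n.cast_nonneg r)]

/-- Weighted Hölder inequality with weights `1 / (k + 1)`. -/
theorem sum_range_mul_rpow_le_harmonic {a : ℕ → ℝ} (ha : ∀ k, 0 ≤ a k) {p : ℝ} (hp : 1 ≤ p)
    {n : ℕ} (hsum : ∑ k ∈ Finset.range n, a k ^ p ≤ 1) :
    ∑ k ∈ Finset.range n, a k * ((k + 1 : ℕ) : ℝ) ^ (p⁻¹ - 1) ≤ (harmonic n : ℝ) ^ (1 - p⁻¹) := by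
  set w : ℕ → ℝ := fun k => ((k + 1 : ℕ) : ℝ)⁻¹
  set f : ℕ → ℝ := fun k => a k * ((k + 1 : ℕ) : ℝ) ^ p⁻¹
  have hwf : ∀ k, w k * f k = a k * ((k + 1 : ℕ) : ℝ) ^ (p⁻¹ - 1) := fun k => by
    simp only [w, f]
    rw [Real.rpow_sub_one (by positivity)]
    ring
  have hwfp : ∀ k, w k * f k ^ p = a k ^ p := fun k => by
    have hk : (0 : ℝ) < (k + 1 : ℕ) := by positivity
    simp only [w, f]
    rw [Real.mul_rpow (ha k) (by positivity), ← Real.rpow_mul hk.le,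
      inv_mul_cancel₀ (by linarith), Real.rpow_one]
    field_simp
  calc ∑ k ∈ Finset.range n, a k * ((k + 1 : ℕ) : ℝ) ^ (p⁻¹ - 1)
      = ∑ k ∈ Finset.range n, w k * f k := by simp only [hwf]
    _ ≤ (∑ k ∈ Finset.range n, w k) ^ (1 - p⁻¹) * (∑ k ∈ Finset.range n, w k * f k ^ p) ^ p⁻¹ :=
        Real.inner_le_weight_mul_Lp_of_nonneg _ hp w f (fun k => by simp only [w]; positivity)
          (fun k => mul_nonneg (ha k) (Real.rpow_nonneg (by positivity) _))
    _ ≤ (harmonic n : ℝ) ^ (1 - p⁻¹) := by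
        simp only [hwfp, w, harmonic]
        push_cast
        refine mul_le_of_le_one_right (by positivity) (Real.rpow_le_one ?_ hsum (by positivity))
        exact Finset.sum_nonneg fun k _ => Real.rpow_nonneg (ha k) p

section DecreasingRearrangement

variable {n : ℕ} (x : Fin n → ℝ)

noncomputable def decPerm : Equiv.Perm (Fin n) := Tuple.sort fun j => -|x j|

/-- The decreasing rearrangement of `|x|`, extended by `0` beyond index `n - 1`. -/
noncomputable def decRearr (k : ℕ) : ℝ := if h : k < n then |x (decPerm x ⟨k, h⟩)| else 0

noncomputable def decRank (j : Fin n) : ℕ := (decPerm x).symm j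

/-- The `k + 1` coordinates of largest absolute value. -/
noncomputable def topSet (k : ℕ) : Finset (Fin n) := {j | decRank x j ≤ k}

@[simp]
theorem mem_topSet {k : ℕ} {j : Fin n} : j ∈ topSet x k ↔ decRank x j ≤ k := by
  simp [topSet]

theorem decRearr_nonneg (k : ℕ) : 0 ≤ decRearr x k := by
  unfold decRearr; split <;> positivity

theorem decRearr_of_le {k : ℕ} (hk : n ≤ k) : decRearr x k = 0 :=
  dif_neg hk.not_gt

theorem decRearr_decRank (j : Fin n) : decRearr x (decRank x j) = |x j| := by
  simp [decRearr, decRank]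

theorem decRearr_antitone : Antitone (decRearr x) := by
  refine antitone_nat_of_succ_le fun k => ?_
  by_cases hk : k + 1 < n
  · have h := Tuple.monotone_sort (fun j => -|x j|)
      (show (⟨k, by omega⟩ : Fin n) ≤ ⟨k + 1, hk⟩ from Fin.mk_le_mk.2 k.le_succ)
    simp only [Function.comp_apply] at h
    rw [decRearr, decRearr, dif_pos hk, dif_pos (by omega)]
    exact neg_le_neg_iff.1 h
  · rw [decRearr_of_le x (not_lt.1 hk)]
    exact decRearr_nonneg x k

theorem sum_range_decRearr (g : ℝ → ℝ) :
    ∑ k ∈ Finset.range n, g (decRearr x k) = ∑ j, g |x j| := by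
  rw [← Fin.sum_univ_eq_sum_range (fun k => g (decRearr x k)),
    ← Equiv.sum_comp (decPerm x) (fun j => g |x j|)]
  refine Finset.sum_congr rfl fun i _ => ?_
  simp [decRearr]

theorem card_topSet {k : ℕ} (hk : k < n) : (topSet x k).card = k + 1 := by
  rw [← Fin.card_Iic (⟨k, hk⟩ : Fin n)]
  exact Finset.card_equiv (decPerm x).symm fun j => by simp [decRank, Fin.le_def]

end DecreasingRearrangement

section LayerCake

variable {n : ℕ}

noncomputable def signs (x : Fin n → ℝ) (j : Fin n) : ℝ := if x j < 0 then -1 else 1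

theorem signs_eq_one_or_neg_one (x : Fin n → ℝ) (j : Fin n) : signs x j = 1 ∨ signs x j = -1 := by
  unfold signs; split <;> simp

theorem signs_mul_abs (x : Fin n → ℝ) (j : Fin n) : signs x j * |x j| = x j := by
  unfold signs; split
  · rw [abs_of_neg ‹_›]; ring
  · rw [abs_of_nonneg (not_lt.1 ‹_›)]; ring

noncomputable def vertex (p : ℝ≥0∞) (J : Finset (Fin n)) (ε : Fin n → ℝ) : Fin n → ℝ :=
  fun j => (J.card : ℝ) ^ (-(1 / p.toReal)) * if j ∈ J then ε j else 0

theorem convex_Kset (p : ℝ≥0∞) : Convex ℝ (Kset p n) := convex_convexHull ℝ _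

theorem vertex_mem_Kset (p : ℝ≥0∞) {J : Finset (Fin n)} {ε : Fin n → ℝ} (hJ : J.Nonempty)
    (hε : ∀ j, ε j = 1 ∨ ε j = -1) : vertex p J ε ∈ Kset p n :=
  subset_convexHull ℝ _ ⟨J, ε, hJ, hε, fun _ => rfl⟩

/-- `K` is symmetric, so the midpoint of two opposite vertices lies in it. -/
theorem zero_mem_Kset (p : ℝ≥0∞) (hn : n ≠ 0) : (0 : Fin n → ℝ) ∈ Kset p n := by
  have hJ : ({⟨0, Nat.pos_of_ne_zero hn⟩} : Finset (Fin n)).Nonempty := Finset.singleton_nonempty _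
  have hmid := convex_Kset p (vertex_mem_Kset p hJ (ε := 1) fun _ => Or.inl rfl)
    (vertex_mem_Kset p hJ (ε := -1) fun _ => Or.inr rfl) one_half_pos.le
    one_half_pos.le (add_halves 1)
  convert hmid using 1
  ext j
  simp only [vertex, Pi.zero_apply, Pi.add_apply, Pi.smul_apply, Pi.one_apply, Pi.neg_apply,
    smul_eq_mul]
  split_ifs <;> ring

noncomputable def layerCoeff (p : ℝ≥0∞) (x : Fin n → ℝ) (k : ℕ) : ℝ :=
  (decRearr x k - decRearr x (k + 1)) * ((k + 1 : ℕ) : ℝ) ^ (1 / p.toReal)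

theorem layerCoeff_nonneg (p : ℝ≥0∞) (x : Fin n → ℝ) (k : ℕ) : 0 ≤ layerCoeff p x k :=
  mul_nonneg (sub_nonneg.2 (decRearr_antitone x k.le_succ)) (by positivity)

theorem eq_sum_layerCoeff_smul_vertex (p : ℝ≥0∞) (x : Fin n → ℝ) :
    x = ∑ k ∈ Finset.range n, layerCoeff p x k • vertex p (topSet x k) (signs x) := by
  funext j
  have hterm : ∀ k ∈ Finset.range n, (layerCoeff p x k • vertex p (topSet x k) (signs x)) j =
      (if decRank x j ≤ k then decRearr x k - decRearr x (k + 1) else 0) * signs x j := by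
    intro k hk
    have hk1 : (0 : ℝ) < (k + 1 : ℕ) := by positivity
    have hcancel :
        ((k + 1 : ℕ) : ℝ) ^ (1 / p.toReal) * ((k + 1 : ℕ) : ℝ) ^ (-(1 / p.toReal)) = 1 := by
      rw [Real.rpow_neg hk1.le, mul_inv_cancel₀ (Real.rpow_pos_of_pos hk1 _).ne']
    simp only [Pi.smul_apply, smul_eq_mul, layerCoeff, vertex, mem_topSet,
      card_topSet x (Finset.mem_range.1 hk)]
    split_ifs
    · linear_combination (decRearr x k - decRearr x (k + 1)) * signs x j * hcancel
    · ring
  have hrank : decRank x j < n := ((decPerm x).symm j).isLt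
  rw [Finset.sum_apply, Finset.sum_congr rfl hterm, ← Finset.sum_mul,
    Finset.sum_range_ite_sub_eq _ hrank.le, decRearr_of_le x le_rfl, decRearr_decRank, sub_zero,
    mul_comm, signs_mul_abs]

end LayerCake

theorem one_le_log_exp_one_mul {n : ℕ} (hn : n ≠ 0) : 1 ≤ Real.log (Real.exp 1 * n) := by
  rw [Real.log_mul (Real.exp_ne_zero 1) (by positivity), Real.log_exp]
  exact le_add_of_nonneg_right (Real.log_natCast_nonneg n)

theorem sum_rpow_abs_le_one_of_lpNorm_le_one {p : ℝ≥0∞} (hp : p ≠ ⊤) (hp₀ : 0 < p.toReal)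
    {n : ℕ} {x : Fin n → ℝ} (hx : lpNorm p x ≤ 1) : ∑ j, |x j| ^ p.toReal ≤ 1 := by
  rw [_root_.lpNorm, if_neg hp, one_div,
    Real.rpow_inv_le_iff_of_pos (by positivity) zero_le_one hp₀, Real.one_rpow] at hx
  exact hx

theorem sum_layerCoeff_le {p : ℝ≥0∞} (hp : 1 ≤ p) {n : ℕ} (hn : n ≠ 0) {x : Fin n → ℝ}
    (hx : lpNorm p x ≤ 1) :
    ∑ k ∈ Finset.range n, layerCoeff p x k ≤ Real.log (Real.exp 1 * n) ^ (1 - 1 / p.toReal) := by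
  unfold layerCoeff
  rcases eq_or_ne p ⊤ with rfl | hp_top
  · simp only [ENNReal.toReal_top, div_zero, Real.rpow_zero, mul_one, sub_zero, Real.rpow_one]
    rw [Finset.sum_range_sub', decRearr_of_le x le_rfl, sub_zero]
    set j₀ := decPerm x ⟨0, Nat.pos_of_ne_zero hn⟩
    have hrank : decRank x j₀ = 0 := by simp [decRank, j₀]
    calc decRearr x 0 = |x j₀| := hrank ▸ decRearr_decRank x j₀
      _ ≤ ⨆ j, |x j| := le_ciSup (f := fun j => |x j|) (Finite.bddAbove_range _) j₀
      _ ≤ 1 := by rwa [_root_.lpNorm, if_pos rfl] at hx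
      _ ≤ Real.log (Real.exp 1 * n) := one_le_log_exp_one_mul hn
  · have hp' : 1 ≤ p.toReal := by
      simpa using ENNReal.toReal_mono hp_top hp
    have hsum : ∑ k ∈ Finset.range n, decRearr x k ^ p.toReal ≤ 1 := by
      rw [sum_range_decRearr x (· ^ p.toReal)]
      exact sum_rpow_abs_le_one_of_lpNorm_le_one hp_top (by linarith) hx
    calc _ ≤ (harmonic n : ℝ) ^ (1 - 1 / p.toReal) := by
          rw [one_div]
          exact (sum_range_sub_mul_rpow_le (decRearr_nonneg x) (by positivity)
            (inv_le_one_of_one_le₀ hp') n).trans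
            (sum_range_mul_rpow_le_harmonic (decRearr_nonneg x) hp' hsum)
      _ ≤ Real.log (Real.exp 1 * n) ^ (1 - 1 / p.toReal) :=
          Real.rpow_le_rpow (Rat.cast_nonneg.2 (harmonic_pos hn).le) (harmonic_le_log_exp_one_mul n)
            (sub_nonneg.2 (div_le_one_of_le₀ hp' (by linarith)))

theorem stmt2 (p : ℝ≥0∞) (hp : 1 ≤ p) (n : ℕ) (hn : 1 ≤ n) :
    {x : Fin n → ℝ | lpNorm p x ≤ 1} ⊆
      (Real.log (Real.exp 1 * n)) ^ (1 - 1 / p.toReal) • Kset p n := by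
  intro x hx
  have hn₀ : n ≠ 0 := Nat.one_le_iff_ne_zero.1 hn
  set C := Real.log (Real.exp 1 * n) ^ (1 - 1 / p.toReal)
  have hC : 0 < C := Real.rpow_pos_of_pos (by linarith [one_le_log_exp_one_mul hn₀]) _
  refine ⟨C⁻¹ • x, ?_, smul_inv_smul₀ hC.ne' x⟩
  rw [eq_sum_layerCoeff_smul_vertex p x, Finset.smul_sum]
  simp_rw [smul_smul]
  refine (convex_Kset p).sum_smul_mem_of_sum_le_one (zero_mem_Kset p hn₀) (fun k _ => ?_) ?_
    fun k hk => vertex_mem_Kset p ?_ (signs_eq_one_or_neg_one x)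
  · exact mul_nonneg (inv_nonneg.2 hC.le) (layerCoeff_nonneg p x k)
  · rw [← Finset.mul_sum]
    exact inv_mul_le_one_of_le₀ (sum_layerCoeff_le hp hn₀ hx) hC.le
  · rw [← Finset.card_pos, card_topSet x (Finset.mem_range.1 hk)]
    exact k.succ_pos
end

section
/- With K as above and 1 ≤ p < ∞, the inclusion B_p^n ⊆ C·K forces C ≳_p (ln n)^{1/p*}: namely, for the vector y with y_j = j^{-1/p*} one has ‖y‖_{K}^* ≍_p 1 (where ‖·‖_K^* is the norm dual to the Minkowski gauge of K) while ‖y‖_{p*} ≍ (ln n)^{1/p*}. -/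
open MeasureTheory ProbabilityTheory
open scoped ENNReal Pointwise

/-!
Let `a = 1/p` and test the inclusion against `y_j = j^{a-1} = j^{-1/p*}`. On a vertex
`|J|^{-a} (ε_j 1_{j∈J})` of `K`, pairing with `y` gives at most `|J|^{-a} ∑_{i ≤ |J|} i^{a-1}`
(the largest `|J|` entries of `y` are its first ones), and concavity of `t ↦ t^a` bounds this by
`1/a = p`. The vector `z_j = (H_n j)^{-a}`, with `H_n` the harmonic number, lies in `B_p^n` and
pairs with `y` to `H_n^{1-a} ≥ (ln n)^{1/p*}`; writing `z = C w` with `w ∈ K` gives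
`H_n^{1-a} ≤ C p`.
-/

open Finset

theorem sum_le_sum_range_card_of_antitone {n : ℕ} {g : ℕ → ℝ} (hg : Antitone g)
    (J : Finset (Fin n)) : ∑ j ∈ J, g j ≤ ∑ i ∈ range #J, g i := by
  induction J using Finset.induction_on_max with
  | empty => simp
  | insert a s hlt ih =>
    have ha : a ∉ s := fun h => (hlt a h).false
    have hcard : #s ≤ a := by
      simpa using card_le_card (fun x hx => mem_Iio.mpr (hlt x hx) : s ⊆ Iio a)
    rw [sum_insert ha, card_insert_of_notMem ha, sum_range_succ, add_comm]
    exact add_le_add ih (hg hcard)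

/-- Tangent-line inequality for the concave function `x ↦ x ^ a` at `x + 1`. -/
theorem rpow_add_mul_rpow_sub_one_le {a : ℝ} (ha₀ : 0 ≤ a) (ha₁ : a ≤ 1) {x : ℝ} (hx : 0 ≤ x) :
    x ^ a + a * (x + 1) ^ (a - 1) ≤ (x + 1) ^ a := by
  have ht : 0 < x + 1 := by linarith
  have hs : -1 ≤ -(x + 1)⁻¹ := neg_le_neg (inv_le_one_of_one_le₀ (by linarith))
  have hb := rpow_one_add_le_one_add_mul_self hs ha₀ ha₁
  have hx' : 1 + -(x + 1)⁻¹ = x / (x + 1) := by field_simp; ring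
  rw [hx', Real.div_rpow hx ht.le, div_le_iff₀ (by positivity)] at hb
  have h : (x + 1) ^ (a - 1) = (x + 1) ^ a * (x + 1)⁻¹ := by
    rw [Real.rpow_sub_one ht.ne', div_eq_mul_inv]
  rw [h]
  nlinarith

theorem sum_range_rpow_sub_one_le {a : ℝ} (ha₀ : 0 < a) (ha₁ : a ≤ 1) (k : ℕ) :
    ∑ i ∈ range k, ((i : ℝ) + 1) ^ (a - 1) ≤ (k : ℝ) ^ a / a := by
  induction k with
  | zero => simp [Real.zero_rpow ha₀.ne']
  | succ k ih =>
    have := rpow_add_mul_rpow_sub_one_le ha₀.le ha₁ (Nat.cast_nonneg k)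
    rw [sum_range_succ, Nat.cast_succ, le_div_iff₀ ha₀]
    rw [le_div_iff₀ ha₀] at ih
    linarith

theorem dotProduct_le_of_mem_Kset {p : ℝ≥0∞} (hp : 1 ≤ p.toReal) {n : ℕ} {x : Fin n → ℝ}
    (hx : x ∈ Kset p n) :
    (fun j : Fin n => ((j : ℝ) + 1) ^ (1 / p.toReal - 1)) ⬝ᵥ x ≤ p.toReal := by
  set a := 1 / p.toReal
  have ha₀ : 0 < a := by positivity
  have ha₁ : a ≤ 1 := by rw [div_le_one (by positivity)]; exact hp
  set y : Fin n → ℝ := fun j => ((j : ℝ) + 1) ^ (a - 1)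
  refine convexHull_min ?_ (convex_halfSpace_le (dotProductBilin ℝ ℝ y).isLinear _) hx
  rintro x ⟨J, ε, hJ, hε, hx⟩
  obtain rfl : x = fun j => (#J : ℝ) ^ (-a) * (if j ∈ J then ε j else 0) := funext hx
  have hc : (0 : ℝ) < #J := by exact_mod_cast hJ.card_pos
  have hsigned : ∑ j ∈ J, y j * ε j ≤ ∑ j ∈ J, y j := by
    refine sum_le_sum fun j _ => ?_
    have hy : 0 ≤ y j := by positivity
    rcases hε j with h | h <;> rw [h] <;> linarith
  have hrearr : ∑ j ∈ J, y j ≤ ∑ i ∈ range #J, ((i : ℝ) + 1) ^ (a - 1) :=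
    sum_le_sum_range_card_of_antitone (g := fun i : ℕ => ((i : ℝ) + 1) ^ (a - 1))
      (fun i k hik => Real.rpow_le_rpow_of_nonpos (by positivity) (by gcongr) (by linarith)) J
  show y ⬝ᵥ _ ≤ _
  calc y ⬝ᵥ _ = (#J : ℝ) ^ (-a) * ∑ j ∈ J, y j * ε j := by
        simp only [dotProduct, mul_ite, mul_zero, ← sum_filter, filter_mem_eq_inter, univ_inter,
          mul_sum]
        exact sum_congr rfl fun j _ => by ring
    _ ≤ (#J : ℝ) ^ (-a) * ((#J : ℝ) ^ a / a) := by
        gcongr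
        exact hsigned.trans (hrearr.trans (sum_range_rpow_sub_one_le ha₀ ha₁ _))
    _ = 1 / a := by rw [Real.rpow_neg hc.le]; field_simp
    _ = p.toReal := one_div_one_div _

theorem lpNorm_rpow_one_div_eq_one {p : ℝ≥0∞} (hp₀ : p ≠ 0) (hp : p ≠ ⊤) {n : ℕ}
    {w : Fin n → ℝ} (hw : ∀ j, 0 ≤ w j) (hsum : ∑ j, w j = 1) :
    lpNorm p (fun j => w j ^ (1 / p.toReal)) = 1 := by
  have hp' : p.toReal ≠ 0 := ENNReal.toReal_ne_zero.mpr ⟨hp₀, hp⟩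
  have hterm : ∀ j, |w j ^ (1 / p.toReal)| ^ p.toReal = w j := fun j => by
    rw [abs_of_nonneg (by positivity [hw j]), ← Real.rpow_mul (hw j), one_div_mul_cancel hp',
      Real.rpow_one]
  simp only [_root_.lpNorm, if_neg hp, hterm, hsum, Real.one_rpow]

theorem sum_fin_inv_eq_harmonic (n : ℕ) : ∑ j : Fin n, ((j : ℝ) + 1)⁻¹ = harmonic n := by
  rw [Fin.sum_univ_eq_sum_range (fun i => ((i : ℝ) + 1)⁻¹), harmonic]
  push_cast
  rfl

theorem dotProduct_rpow_sub_one_harmonic {a : ℝ} {n : ℕ} (hn : n ≠ 0) :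
    (fun j : Fin n => ((j : ℝ) + 1) ^ (a - 1)) ⬝ᵥ
        (fun j : Fin n => ((harmonic n : ℝ) * (j + 1))⁻¹ ^ a) = (harmonic n : ℝ) ^ (1 - a) := by
  have hH : (0 : ℝ) < harmonic n := by exact_mod_cast harmonic_pos hn
  have hterm : ∀ j : Fin n, ((j : ℝ) + 1) ^ (a - 1) * ((harmonic n : ℝ) * (j + 1))⁻¹ ^ a =
      (harmonic n : ℝ) ^ (-a) * ((j : ℝ) + 1)⁻¹ := fun j => by
    have hj : (0 : ℝ) < j + 1 := by positivity
    rw [Real.inv_rpow (by positivity), Real.mul_rpow hH.le hj.le, Real.rpow_sub_one hj.ne',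
      Real.rpow_neg hH.le]
    field_simp
  simp only [dotProduct, hterm, ← mul_sum, sum_fin_inv_eq_harmonic]
  rw [Real.rpow_neg hH.le, Real.rpow_sub hH, Real.rpow_one]
  field_simp

/-- The factor `(ln n)^{1/p*}` in the inclusion `B_p^n ⊆ C • K` is optimal up to a
constant depending only on `p`: any positive `C` for which the inclusion holds must
satisfy `C ≥ c(p) (ln n)^{1 - 1/p}`. -/
theorem stmt3 (p : ℝ) (hp1 : 1 ≤ p) :
    ∃ c : ℝ, 0 < c ∧ ∀ n : ℕ, 1 ≤ n → ∀ C : ℝ, 0 < C →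
      {x : Fin n → ℝ | lpNorm (ENNReal.ofReal p) x ≤ 1} ⊆
        C • Kset (ENNReal.ofReal p) n →
      c * (Real.log n) ^ (1 - 1 / p) ≤ C := by
  have hp₀ : 0 < p := by linarith
  have hpR : (ENNReal.ofReal p).toReal = p := ENNReal.toReal_ofReal hp₀.le
  refine ⟨1 / p, by positivity, fun n hn C hC hsub => ?_⟩
  have hH : (0 : ℝ) < harmonic n := by exact_mod_cast harmonic_pos (Nat.one_le_iff_ne_zero.mp hn)
  have hsum : ∑ j : Fin n, ((harmonic n : ℝ) * (j + 1))⁻¹ = 1 := by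
    simp only [mul_inv, ← mul_sum, sum_fin_inv_eq_harmonic, inv_mul_cancel₀ hH.ne']
  have hz := lpNorm_rpow_one_div_eq_one (ENNReal.ofReal_pos.mpr hp₀).ne' ENNReal.ofReal_ne_top
    (fun j => by positivity) hsum
  rw [hpR] at hz
  obtain ⟨w, hw, hzw⟩ := hsub hz.le
  have hKbound := dotProduct_le_of_mem_Kset (by rwa [hpR]) hw
  rw [hpR] at hKbound
  have hdual : (harmonic n : ℝ) ^ (1 - 1 / p) ≤ C * p := by
    rw [← dotProduct_rpow_sub_one_harmonic (by omega), ← hzw, dotProduct_smul, smul_eq_mul]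
    gcongr
  have hlog : Real.log n ≤ harmonic n := by simpa using log_le_harmonic_floor n (Nat.cast_nonneg n)
  calc 1 / p * Real.log n ^ (1 - 1 / p) ≤ 1 / p * (harmonic n : ℝ) ^ (1 - 1 / p) := by
        gcongr
        exact sub_nonneg.mpr (div_le_one_of_le₀ hp1 hp₀.le)
    _ ≤ 1 / p * (C * p) := by gcongr
    _ = C := by field_simp
end

section
/- Let r ∈ (0,2], set 1/s = 1/r − 1/2, let Y be a non-negative random variable with P(Y ≥ t) = e^{−t^s} for all t ≥ 0, and let g ~ N(0,1) be independent of Y. Then for all t ≥ 0, P(|g|·Y ≥ t) ≥ c e^{−4 t^r}, where c = √(2/π) e^{−2}. (For r = 2, interpret Y ≡ 1.) -/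
/-!
Split `t = a * b` with `a = t ^ (r / 2)` and `b = t ^ (1 - r / 2)`, so that
`a ^ 2 = b ^ s = t ^ r`: this is exactly where `1 / s = 1 / r - 1 / 2` enters. By independence
`P(|g| Y ≥ t) ≥ P(|g| ≥ a) P(Y ≥ b)`, the Weibull factor is `e^{-t^r}`, and bounding the
Gaussian density from below on `[a, a + 1]` gives `P(|g| ≥ a) ≥ c e^{-a^2}`.
-/

open MeasureTheory ProbabilityTheory Real
open scoped ENNReal NNReal

lemma gaussianPDFReal_zero_le_of_abs_le {v : ℝ≥0} {x y : ℝ} (h : |x| ≤ |y|) :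
    gaussianPDFReal 0 v y ≤ gaussianPDFReal 0 v x := by
  simp only [gaussianPDFReal, sub_zero]
  refine mul_le_mul_of_nonneg_left (exp_le_exp.2 ?_) (by positivity)
  exact div_le_div_of_nonneg_right (neg_le_neg (sq_le_sq.2 h)) (by positivity)

lemma ofReal_gaussianPDFReal_add_one_le_gaussianReal {v : ℝ≥0} (hv : v ≠ 0) {u : ℝ}
    (hu : 0 ≤ u) :
    ENNReal.ofReal (gaussianPDFReal 0 v (u + 1)) ≤ gaussianReal 0 v {x | u ≤ |x|} :=
  calc ENNReal.ofReal (gaussianPDFReal 0 v (u + 1))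
      = ∫⁻ _ in Set.Icc u (u + 1), ENNReal.ofReal (gaussianPDFReal 0 v (u + 1)) := by
        simp [Real.volume_Icc]
    _ ≤ ∫⁻ x in Set.Icc u (u + 1), gaussianPDF 0 v x := by
        refine setLIntegral_mono (measurable_gaussianPDF 0 v) fun x hx ↦ ?_
        refine ENNReal.ofReal_le_ofReal (gaussianPDFReal_zero_le_of_abs_le ?_)
        rw [abs_of_nonneg (hu.trans hx.1), abs_of_nonneg (by linarith)]
        exact hx.2
    _ = gaussianReal 0 v (Set.Icc u (u + 1)) := (gaussianReal_apply 0 hv _).symm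
    _ ≤ gaussianReal 0 v {x | u ≤ |x|} := measure_mono fun x hx ↦ hx.1.trans (le_abs_self x)

lemma sqrt_two_div_pi_mul_exp_le_gaussianPDFReal (u : ℝ) :
    √(2 / π) * exp (-2) * exp (-u ^ 2) ≤ gaussianPDFReal 0 1 (u + 1) := by
  have h_sqrt : √(2 / π) = 2 * (√(2 * π))⁻¹ := by
    rw [eq_mul_inv_iff_mul_eq₀ (by positivity), ← sqrt_mul (by positivity),
      show 2 / π * (2 * π) = 2 ^ 2 by field_simp, sqrt_sq zero_le_two]
  have h_exp : 2 * exp (-2) * exp (-u ^ 2) ≤ exp (-(u + 1) ^ 2 / 2) :=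
    calc 2 * exp (-2) * exp (-u ^ 2)
        ≤ exp 1 * exp (-2) * exp (-u ^ 2) := by gcongr; linarith [add_one_le_exp (1 : ℝ)]
      _ = exp (-1 - u ^ 2) := by rw [← exp_add, ← exp_add]; ring_nf
      _ ≤ exp (-(u + 1) ^ 2 / 2) := exp_le_exp.2 (by nlinarith [sq_nonneg (u - 1)])
  simp only [gaussianPDFReal, NNReal.coe_one, mul_one, sub_zero, h_sqrt]
  calc 2 * (√(2 * π))⁻¹ * exp (-2) * exp (-u ^ 2)
      = (√(2 * π))⁻¹ * (2 * exp (-2) * exp (-u ^ 2)) := by ring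
    _ ≤ (√(2 * π))⁻¹ * exp (-(u + 1) ^ 2 / 2) := by gcongr

lemma ofReal_le_measure_le_abs_of_map_eq_gaussianReal {Ω : Type*} [MeasurableSpace Ω]
    {μ : Measure Ω} {g : Ω → ℝ} (hg : μ.map g = gaussianReal 0 1) {u : ℝ} (hu : 0 ≤ u) :
    ENNReal.ofReal (√(2 / π) * exp (-2) * exp (-u ^ 2)) ≤ μ {ω | u ≤ |g ω|} := by
  have hg_ae : AEMeasurable g μ := .of_map_ne_zero (by simp [hg, IsProbabilityMeasure.ne_zero])
  calc ENNReal.ofReal (√(2 / π) * exp (-2) * exp (-u ^ 2))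
      ≤ gaussianReal 0 1 {x | u ≤ |x|} := (ENNReal.ofReal_le_ofReal
        (sqrt_two_div_pi_mul_exp_le_gaussianPDFReal u)).trans
        (ofReal_gaussianPDFReal_add_one_le_gaussianReal one_ne_zero hu)
    _ = μ {ω | u ≤ |g ω|} := by
        rw [← hg, Measure.map_apply_of_aemeasurable hg_ae
          (measurableSet_le measurable_const measurable_abs)]
        rfl

lemma ProbabilityTheory.IndepFun.measure_le_abs_mul_measure_le_le {Ω : Type*}
    [MeasurableSpace Ω] {μ : Measure Ω} {g Y : Ω → ℝ} (h : IndepFun g Y μ) (a : ℝ) {b : ℝ}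
    (hb : 0 ≤ b) :
    μ {ω | a ≤ |g ω|} * μ {ω | b ≤ Y ω} ≤ μ {ω | a * b ≤ |g ω| * Y ω} := by
  refine (h.measure_inter_preimage_eq_mul {x | a ≤ |x|} (Set.Ici b)
    (measurableSet_le measurable_const measurable_abs) measurableSet_Ici).symm.trans_le ?_
  exact measure_mono fun ω hω ↦ mul_le_mul hω.1 hω.2 hb (abs_nonneg _)

lemma one_sub_half_mul_eq_of_one_div_eq {r s : ℝ} (hr0 : r ≠ 0) (hr2 : r ≠ 2)
    (hs : 1 / s = 1 / r - 1 / 2) : (1 - r / 2) * s = r := by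
  have hs0 : s ≠ 0 := by
    rintro rfl
    rw [div_zero, eq_comm, sub_eq_zero] at hs
    exact hr2 (by simpa using hs)
  field_simp at hs ⊢
  linarith

theorem stmt8_general {Ω : Type*} [MeasurableSpace Ω] (μ : Measure Ω)
    (r s : ℝ) (hr0 : 0 < r)
    (g Y : Ω → ℝ)
    (hg : Measure.map g μ = gaussianReal 0 1)
    (hindep : IndepFun g Y μ)
    (hcase : (r < 2 ∧ 1 / s = 1 / r - 1 / 2 ∧
        ∀ t : ℝ, 0 ≤ t → μ {ω | t ≤ Y ω} = ENNReal.ofReal (Real.exp (-t ^ s)))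
      ∨ (r = 2 ∧ ∀ᵐ ω ∂μ, Y ω = 1)) :
    ∀ t : ℝ, 0 ≤ t →
      ENNReal.ofReal
          (Real.sqrt (2 / Real.pi) * Real.exp (-2) * Real.exp (-4 * t ^ r)) ≤
        μ {ω | t ≤ |g ω| * Y ω} := by
  intro t ht
  have htr : 0 ≤ t ^ r := rpow_nonneg ht r
  rcases hcase with ⟨hr_lt, hs, hY⟩ | ⟨rfl, hY⟩
  · have ha : (t ^ (r / 2)) ^ 2 = t ^ r := by rw [← rpow_mul_natCast ht]; norm_num
    have hb : (t ^ (1 - r / 2)) ^ s = t ^ r := by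
      rw [← rpow_mul ht, one_sub_half_mul_eq_of_one_div_eq hr0.ne' hr_lt.ne hs]
    have hab : t ^ (r / 2) * t ^ (1 - r / 2) = t := by
      rw [← rpow_add' ht (by norm_num)]; norm_num
    calc ENNReal.ofReal (√(2 / π) * exp (-2) * exp (-4 * t ^ r))
        ≤ ENNReal.ofReal (√(2 / π) * exp (-2) * exp (-(t ^ (r / 2)) ^ 2)) *
            ENNReal.ofReal (exp (-(t ^ (1 - r / 2)) ^ s)) := by
          rw [← ENNReal.ofReal_mul (by positivity), ha, hb, mul_assoc (√(2 / π) * exp (-2)),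
            ← exp_add]
          gcongr
          linarith
      _ ≤ μ {ω | t ^ (r / 2) ≤ |g ω|} * μ {ω | t ^ (1 - r / 2) ≤ Y ω} := by
          rw [hY _ (rpow_nonneg ht _)]
          gcongr
          exact ofReal_le_measure_le_abs_of_map_eq_gaussianReal hg (rpow_nonneg ht _)
      _ ≤ μ {ω | t ≤ |g ω| * Y ω} := by
          have h := hindep.measure_le_abs_mul_measure_le_le (t ^ (r / 2))
            (rpow_nonneg ht (1 - r / 2))
          rwa [hab] at h
  · have hY_one : {ω | t ≤ |g ω| * Y ω} =ᵐ[μ] {ω | t ≤ |g ω|} := by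
      filter_upwards [hY] with ω hω
      change (t ≤ |g ω| * Y ω) = (t ≤ |g ω|)
      rw [hω, mul_one]
    rw [measure_congr hY_one]
    refine le_trans ?_ (ofReal_le_measure_le_abs_of_map_eq_gaussianReal hg ht)
    rw [rpow_two] at htr ⊢
    gcongr
    linarith

/-- Lower tail bound for `|g|·Y`, where `g ~ N(0,1)` is independent of a Weibull
variable `Y` with shape `s` given by `1/s = 1/r - 1/2` (and `Y ≡ 1` when `r = 2`):
`P(|g| Y ≥ t) ≥ c e^{-4 t^r}` with `c = √(2/π) e^{-2}`. -/
theorem stmt8 {Ω : Type*} [MeasurableSpace Ω] (μ : Measure Ω) [IsProbabilityMeasure μ]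
    (r s : ℝ) (hr0 : 0 < r) (hr2 : r ≤ 2)
    (g Y : Ω → ℝ) (hgmeas : Measurable g) (hYmeas : Measurable Y)
    (hY0 : ∀ ω, 0 ≤ Y ω)
    (hg : Measure.map g μ = gaussianReal 0 1)
    (hindep : IndepFun g Y μ)
    (hcase : (r < 2 ∧ 1 / s = 1 / r - 1 / 2 ∧
        ∀ t : ℝ, 0 ≤ t → μ {ω | t ≤ Y ω} = ENNReal.ofReal (Real.exp (-t ^ s)))
      ∨ (r = 2 ∧ ∀ᵐ ω ∂μ, Y ω = 1)) :
    ∀ t : ℝ, 0 ≤ t →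
      ENNReal.ofReal
          (Real.sqrt (2 / Real.pi) * Real.exp (-2) * Real.exp (-4 * t ^ r)) ≤
        μ {ω | t ≤ |g ω| * Y ω} :=
  stmt8_general μ r s hr0 g Y hg hindep hcase
end

section
/- Let K, L > 0, r ∈ (0,2], and let Z satisfy P(|Z| ≥ t) ≤ K e^{−t^r/L} for all t ≥ 0. Let Y be non-negative with P(Y ≥ t) = e^{−t^s}, 1/s = 1/r − 1/2, and g ~ N(0,1) independent of Y, and set c = √(2/π) e^{−2}. Then there exist, on a common probability space, random variables U distributed as |Z| and V distributed as |g|Y such that almost surely U ≤ (8L)^{1/r} ((ln(K/c)/4)^{1/r} + V). -/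
/-!
Write `c = √(2/π) e^{-2}`. Integrating the Gaussian density over `(u, u + 1]` gives
`P(g > u) ≥ c e^{-u²}`; for `r < 2` and `t > 0` the event `|g| Y > t` contains
`{|g| > t^{r/2}} ∩ {Y ≥ t^{1 - r/2}}`, and since `1/s = 1/r - 1/2` independence yields
`P(|g| Y > t) ≥ c e^{-2 t^r}`. With `a = (8L)^{1/r}` and `b = (ln(K/c)/4)^{1/r}` the tail
bound of `Z` gives `P(|Z| > a (b + t)) ≤ K e^{-8 (b + t)^r} ≤ c e^{-4 t^r}`, so `|Z|` is
stochastically dominated by `a (b + |g| Y)`. Such a dominance is realized pointwise by feeding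
one uniform variable into both quantile functions.
-/

open MeasureTheory ProbabilityTheory Set Filter Topology Real
open scoped ENNReal

namespace ProbabilityTheory

/-- Outside `(0, 1)` the infimum would be a junk value, so the quantile is set to `0` there. -/
noncomputable def quantile (m : Measure ℝ) (p : ℝ) : ℝ :=
  if p ∈ Ioo 0 1 then sInf {x | p ≤ cdf m x} else 0

section Quantile

variable (m : Measure ℝ)

lemma quantile_le_iff {p : ℝ} (hp : p ∈ Ioo 0 1) {x : ℝ} :
    quantile m p ≤ x ↔ p ≤ cdf m x := by
  set S := {x | p ≤ cdf m x}
  have hne : S.Nonempty :=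
    ((tendsto_cdf_atTop m).eventually (eventually_ge_nhds hp.2)).exists
  have hbdd : BddBelow S := by
    obtain ⟨x₀, hx₀⟩ := ((tendsto_cdf_atBot m).eventually (eventually_lt_nhds hp.1)).exists
    refine ⟨x₀, fun x hx => ?_⟩
    by_contra! h
    exact (hx₀.trans_le hx).not_ge (monotone_cdf m h.le)
  have hle_inf : p ≤ cdf m (sInf S) := by
    have hright : Tendsto (cdf m) (𝓝[>] (sInf S)) (𝓝 (cdf m (sInf S))) :=
      (((cdf m).right_continuous _).mono Ioi_subset_Ici_self).tendsto
    refine ge_of_tendsto hright (eventually_mem_nhdsWithin.mono fun y hy => ?_)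
    obtain ⟨z, hzS, hzy⟩ := (csInf_lt_iff hbdd hne).mp hy
    exact hzS.trans (monotone_cdf m hzy.le)
  rw [quantile, if_pos hp]
  exact ⟨fun h => hle_inf.trans (monotone_cdf m h), fun h => csInf_le hbdd h⟩

lemma measurable_quantile : Measurable (quantile m) := by
  refine measurable_of_Iic fun x => ?_
  have : quantile m ⁻¹' Iic x = (Ioo 0 1).ite (Iic (cdf m x)) {_p | 0 ≤ x} := by
    ext p
    by_cases hp : p ∈ Ioo 0 1
    · simp [Set.ite, hp, quantile_le_iff m hp]
    · simp [Set.ite, hp, quantile]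
  rw [this]
  exact measurableSet_Ioo.ite measurableSet_Iic (.const _)

instance : IsProbabilityMeasure (volume.restrict (Ioo (0 : ℝ) 1)) :=
  ⟨by simp [Real.volume_Ioo]⟩

lemma map_quantile [IsProbabilityMeasure m] :
    (volume.restrict (Ioo (0 : ℝ) 1)).map (quantile m) = m := by
  refine Measure.ext_of_Iic _ m fun x => ?_
  rw [Measure.map_apply (measurable_quantile m) measurableSet_Iic,
    Measure.restrict_apply (measurable_quantile m measurableSet_Iic), ← ofReal_cdf]
  have hset : quantile m ⁻¹' Iic x ∩ Ioo 0 1 = Iic (cdf m x) ∩ Ioo 0 1 := by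
    ext p
    simp only [mem_inter_iff, mem_preimage, mem_Iic, and_congr_left_iff]
    exact fun hp => quantile_le_iff m hp
  rw [hset]
  refine le_antisymm ?_ ?_
  · calc volume (Iic (cdf m x) ∩ Ioo 0 1) ≤ volume (Ioc 0 (cdf m x)) :=
          measure_mono fun p ⟨hp, hp0, _⟩ => ⟨hp0, hp⟩
      _ = ENNReal.ofReal (cdf m x) := by simp
  · calc ENNReal.ofReal (cdf m x) = volume (Ioo 0 (cdf m x)) := by simp
      _ ≤ volume (Iic (cdf m x) ∩ Ioo 0 1) :=
          measure_mono fun p ⟨hp0, hp⟩ => ⟨hp.le, hp0, hp.trans_le (cdf_le_one m x)⟩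

end Quantile

lemma cdf_le_cdf_of_measure_Ioi_le {m n : Measure ℝ} [IsProbabilityMeasure m]
    [IsProbabilityMeasure n] {x t : ℝ} (h : m (Ioi x) ≤ n (Ioi t)) : cdf n t ≤ cdf m x := by
  rw [cdf_eq_real, cdf_eq_real, ← compl_Ioi, ← compl_Ioi,
    probReal_compl_eq_one_sub measurableSet_Ioi, probReal_compl_eq_one_sub measurableSet_Ioi]
  have := ENNReal.toReal_mono (measure_ne_top _ _) h
  simp only [measureReal_def]
  linarith

theorem exists_coupling_le_of_measure_Ioi_le (m n : Measure ℝ) [IsProbabilityMeasure m]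
    [IsProbabilityMeasure n] {f : ℝ → ℝ} (h : ∀ t, m (Ioi (f t)) ≤ n (Ioi t)) :
    ∃ (Ω : Type) (_ : MeasurableSpace Ω) (P : Measure Ω) (_ : IsProbabilityMeasure P)
      (U V : Ω → ℝ), Measurable U ∧ Measurable V ∧ P.map U = m ∧ P.map V = n ∧
      ∀ᵐ ω ∂P, U ω ≤ f (V ω) := by
  refine ⟨ℝ, inferInstance, volume.restrict (Ioo 0 1), inferInstance, quantile m, quantile n,
    measurable_quantile m, measurable_quantile n, map_quantile m, map_quantile n, ?_⟩
  filter_upwards [ae_restrict_mem measurableSet_Ioo] with p hp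
  rw [quantile_le_iff m hp]
  exact ((quantile_le_iff n hp).1 le_rfl).trans (cdf_le_cdf_of_measure_Ioi_le (h _))

end ProbabilityTheory

noncomputable def gaussianTailConst : ℝ := √(2 / π) * exp (-2)

lemma gaussianTailConst_pos : 0 < gaussianTailConst := by
  unfold gaussianTailConst; positivity

lemma gaussianTailConst_le_inv_sqrt_mul_exp :
    gaussianTailConst ≤ (√(2 * π))⁻¹ * exp (-1) := by
  have hsqrt : √(2 / π) = 2 * (√(2 * π))⁻¹ := by
    rw [show 2 / π = 2 ^ 2 * (2 * π)⁻¹ by field_simp, sqrt_mul (by positivity),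
      sqrt_sq zero_le_two, sqrt_inv]
  have h2e : 2 * exp (-2) ≤ exp (-1) := by
    calc 2 * exp (-2) ≤ exp 1 * exp (-2) := by gcongr; linarith [exp_one_gt_d9]
      _ = exp (-1) := by rw [← exp_add]; norm_num
  rw [gaussianTailConst, hsqrt, mul_comm 2, mul_assoc]
  gcongr

lemma gaussianTailConst_le_exp_neg_one : gaussianTailConst ≤ exp (-1) := by
  refine gaussianTailConst_le_inv_sqrt_mul_exp.trans (mul_le_of_le_one_left (exp_pos _).le ?_)
  rw [inv_le_one₀ (by positivity), one_le_sqrt]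
  nlinarith [pi_gt_three]

/-- On `(u, u + 1]` the density is at least `(2π)^{-1/2} e^{-1} e^{-u²}`, as
`x²/2 ≤ (u + 1)²/2 ≤ u² + 1` there. -/
lemma ofReal_gaussianTailConst_mul_le_gaussianReal_Ioi {u : ℝ} (hu : 0 ≤ u) :
    ENNReal.ofReal (gaussianTailConst * exp (-u ^ 2)) ≤ gaussianReal 0 1 (Ioi u) := by
  have hpdf : ∀ x ∈ Ioc u (u + 1),
      ENNReal.ofReal (gaussianTailConst * exp (-u ^ 2)) ≤ gaussianPDF 0 1 x := by
    intro x ⟨hux, hxu⟩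
    simp only [gaussianPDF, gaussianPDFReal, NNReal.coe_one, mul_one, sub_zero]
    gcongr ENNReal.ofReal ?_
    calc gaussianTailConst * exp (-u ^ 2)
        ≤ (√(2 * π))⁻¹ * exp (-1) * exp (-u ^ 2) := by
          gcongr; exact gaussianTailConst_le_inv_sqrt_mul_exp
      _ = (√(2 * π))⁻¹ * exp (-1 + -u ^ 2) := by rw [exp_add, mul_assoc]
      _ ≤ (√(2 * π))⁻¹ * exp (-x ^ 2 / 2) := by
          gcongr; nlinarith [sq_nonneg (u - 1)]
  calc ENNReal.ofReal (gaussianTailConst * exp (-u ^ 2))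
      = ∫⁻ _ in Ioc u (u + 1), ENNReal.ofReal (gaussianTailConst * exp (-u ^ 2)) := by simp
    _ ≤ ∫⁻ x in Ioc u (u + 1), gaussianPDF 0 1 x :=
        setLIntegral_mono (measurable_gaussianPDF 0 1) hpdf
    _ ≤ ∫⁻ x in Ioi u, gaussianPDF 0 1 x := lintegral_mono_set Ioc_subset_Ioi_self
    _ = gaussianReal 0 1 (Ioi u) := (gaussianReal_apply 0 one_ne_zero _).symm

section ScaleMixture

variable {Ω : Type*} [MeasurableSpace Ω] {ν : Measure Ω} {g Y : Ω → ℝ}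

lemma ProbabilityTheory.IndepFun.measure_preimage_mul_le_measure_lt_abs_mul
    (hind : IndepFun g Y ν) {A : Set ℝ} (hA : MeasurableSet A) {t y : ℝ}
    (hAt : ∀ x ∈ A, t < |x| * y) :
    ν (g ⁻¹' A) * ν {ω | y ≤ Y ω} ≤ ν {ω | t < |g ω| * Y ω} := by
  change ν (g ⁻¹' A) * ν (Y ⁻¹' Ici y) ≤ _
  rw [← hind.measure_inter_preimage_eq_mul A (Ici y) hA measurableSet_Ici]
  exact measure_mono fun ω ⟨hgA, hYy⟩ =>
    (hAt _ hgA).trans_le (mul_le_mul_of_nonneg_left hYy (abs_nonneg _))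

variable (hg : Measurable g) (hgauss : ν.map g = gaussianReal 0 1)
include hg hgauss

lemma ofReal_le_measure_lt_abs_mul_of_weibull (hind : IndepFun g Y ν) {r s : ℝ} (hr0 : 0 < r)
    (hr2 : r < 2) (hs : 1 / s = 1 / r - 1 / 2)
    (hYtail : ∀ t : ℝ, 0 ≤ t → ν {ω | t ≤ Y ω} = ENNReal.ofReal (exp (-t ^ s)))
    {t : ℝ} (ht : 0 ≤ t) :
    ENNReal.ofReal (gaussianTailConst * exp (-(2 * t ^ r))) ≤ ν {ω | t < |g ω| * Y ω} := by
  have hgA : ∀ A, MeasurableSet A → ν (g ⁻¹' A) = gaussianReal 0 1 A := fun A hA => by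
    rw [← Measure.map_apply hg hA, hgauss]
  rcases ht.eq_or_lt with rfl | ht
  · have hnz : gaussianReal 0 1 {0}ᶜ = 1 := by
      rw [prob_compl_eq_one_sub (measurableSet_singleton 0),
        gaussianReal_absolutelyContinuous 0 one_ne_zero Real.volume_singleton, tsub_zero]
    calc ENNReal.ofReal (gaussianTailConst * exp (-(2 * 0 ^ r)))
        ≤ ENNReal.ofReal (exp (-1 ^ s)) := by
          rw [zero_rpow hr0.ne', one_rpow]
          exact ENNReal.ofReal_le_ofReal (by simpa using gaussianTailConst_le_exp_neg_one)
      _ = ν (g ⁻¹' {0}ᶜ) * ν {ω | 1 ≤ Y ω} := by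
          rw [hgA _ (measurableSet_singleton 0).compl, hnz, hYtail 1 zero_le_one, one_mul]
      _ ≤ _ := hind.measure_preimage_mul_le_measure_lt_abs_mul
          (measurableSet_singleton 0).compl fun x hx => by simpa using hx
  have hc := gaussianTailConst_pos
  have hsr : s * (2 - r) = 2 * r := by
    have hs0 : s ≠ 0 := by
      rintro rfl
      rw [div_zero] at hs
      field_simp at hs
      linarith
    field_simp at hs
    linarith
  set y := t ^ ((2 - r) / 2)
  have hys : y ^ s = t ^ r := by
    rw [← rpow_mul ht.le]
    congr 1
    linarith
  have hsq : (t ^ (r / 2)) ^ 2 = t ^ r := by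
    rw [← rpow_natCast, ← rpow_mul ht.le]
    norm_num
  have hty : t ^ (r / 2) * y = t := by
    rw [← rpow_add ht, show r / 2 + (2 - r) / 2 = 1 by ring, rpow_one]
  calc ENNReal.ofReal (gaussianTailConst * exp (-(2 * t ^ r)))
      = ENNReal.ofReal (gaussianTailConst * exp (-(t ^ (r / 2)) ^ 2))
          * ENNReal.ofReal (exp (-y ^ s)) := by
        rw [← ENNReal.ofReal_mul (by positivity), hsq, hys, mul_assoc, ← exp_add]
        ring_nf
    _ ≤ gaussianReal 0 1 (Ioi (t ^ (r / 2))) * ν {ω | y ≤ Y ω} := by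
        rw [hYtail y (by positivity)]
        gcongr
        exact ofReal_gaussianTailConst_mul_le_gaussianReal_Ioi (by positivity)
    _ = ν (g ⁻¹' Ioi (t ^ (r / 2))) * ν {ω | y ≤ Y ω} := by rw [hgA _ measurableSet_Ioi]
    _ ≤ _ := hind.measure_preimage_mul_le_measure_lt_abs_mul measurableSet_Ioi fun x hx =>
        hty ▸ mul_lt_mul_of_pos_right (hx.trans_le (le_abs_self x)) (by positivity)

lemma ofReal_le_measure_lt_abs_mul_of_ae_eq_one (hY : ∀ᵐ ω ∂ν, Y ω = 1) {t : ℝ}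
    (ht : 0 ≤ t) :
    ENNReal.ofReal (gaussianTailConst * exp (-t ^ 2)) ≤ ν {ω | t < |g ω| * Y ω} := by
  have hae : {ω | t < |g ω| * Y ω} =ᵐ[ν] g ⁻¹' {x | t < |x|} := by
    rw [eventuallyEq_set]
    filter_upwards [hY] with ω hω
    simp [hω]
  rw [measure_congr hae, ← Measure.map_apply hg (measurableSet_lt measurable_const
    measurable_abs), hgauss]
  exact (ofReal_gaussianTailConst_mul_le_gaussianReal_Ioi ht).trans
    (measure_mono fun x hx => lt_of_lt_of_le hx (le_abs_self x))

lemma ofReal_le_measure_lt_abs_mul (hind : IndepFun g Y ν) {r s : ℝ} (hr0 : 0 < r)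
    (hcase : (r < 2 ∧ 1 / s = 1 / r - 1 / 2 ∧
        ∀ t : ℝ, 0 ≤ t → ν {ω | t ≤ Y ω} = ENNReal.ofReal (exp (-t ^ s)))
      ∨ (r = 2 ∧ ∀ᵐ ω ∂ν, Y ω = 1))
    {t : ℝ} (ht : 0 ≤ t) :
    ENNReal.ofReal (gaussianTailConst * exp (-(2 * t ^ r))) ≤ ν {ω | t < |g ω| * Y ω} := by
  rcases hcase with ⟨hr2, hs, hYtail⟩ | ⟨rfl, hY⟩
  · exact ofReal_le_measure_lt_abs_mul_of_weibull hg hgauss hind hr0 hr2 hs hYtail ht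
  · have hc := gaussianTailConst_pos
    refine le_trans ?_ (ofReal_le_measure_lt_abs_mul_of_ae_eq_one hg hgauss hY ht)
    rw [rpow_two]
    gcongr
    nlinarith [sq_nonneg t]

end ScaleMixture

lemma mul_exp_neg_rpow_le {K L r c t : ℝ} (hr : 0 < r) (hL : 0 < L) (hc : 0 < c)
    (hcK : c ≤ K) (ht : 0 ≤ t) :
    K * exp (-((8 * L) ^ (1 / r) * ((log (K / c) / 4) ^ (1 / r) + t)) ^ r / L)
      ≤ c * exp (-(4 * t ^ r)) := by
  have hK : 0 < K := hc.trans_le hcK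
  have hlog : 0 ≤ log (K / c) := log_nonneg ((one_le_div hc).2 hcK)
  set b := (log (K / c) / 4) ^ (1 / r)
  have hb : 0 ≤ b := by positivity
  have hbr : b ^ r = log (K / c) / 4 := by
    rw [← rpow_mul (by positivity), one_div_mul_cancel hr.ne', rpow_one]
  have hpow : ((8 * L) ^ (1 / r) * (b + t)) ^ r / L = 8 * (b + t) ^ r := by
    rw [mul_rpow (by positivity) (by positivity), ← rpow_mul (by positivity),
      one_div_mul_cancel hr.ne', rpow_one]
    field_simp
  have hb_le : b ^ r ≤ (b + t) ^ r := by gcongr; linarith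
  have ht_le : t ^ r ≤ (b + t) ^ r := by gcongr; linarith
  calc K * exp (-((8 * L) ^ (1 / r) * (b + t)) ^ r / L)
      ≤ K * exp (-(log (K / c) + 4 * t ^ r)) := by
        rw [neg_div, hpow]
        gcongr
        linarith
    _ = c * exp (-(4 * t ^ r)) := by
        rw [neg_add, exp_add, exp_neg, exp_log (by positivity)]
        field_simp

theorem stmt9_general (K L r : ℝ) (hL : 0 < L) (hr0 : 0 < r)
    {Ω₁ : Type*} [MeasurableSpace Ω₁] (μ : Measure Ω₁) [IsProbabilityMeasure μ]
    (Z : Ω₁ → ℝ) (hZmeas : Measurable Z)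
    (hZtail : ∀ t : ℝ, 0 ≤ t →
      μ {ω | t ≤ |Z ω|} ≤ ENNReal.ofReal (K * Real.exp (-t ^ r / L)))
    {Ω₂ : Type*} [MeasurableSpace Ω₂] (ν : Measure Ω₂) [IsProbabilityMeasure ν]
    (g Y : Ω₂ → ℝ) (hgmeas : Measurable g) (hYmeas : Measurable Y)
    (hY0 : ∀ ω, 0 ≤ Y ω)
    (hg : Measure.map g ν = gaussianReal 0 1)
    (hindep : IndepFun g Y ν)
    (s : ℝ)
    (hcase : (r < 2 ∧ 1 / s = 1 / r - 1 / 2 ∧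
        ∀ t : ℝ, 0 ≤ t → ν {ω | t ≤ Y ω} = ENNReal.ofReal (Real.exp (-t ^ s)))
      ∨ (r = 2 ∧ ∀ᵐ ω ∂ν, Y ω = 1)) :
    ∃ (Ω : Type) (_ : MeasurableSpace Ω) (P : Measure Ω) (_ : IsProbabilityMeasure P)
      (U V : Ω → ℝ), Measurable U ∧ Measurable V ∧
      Measure.map U P = Measure.map (fun ω => |Z ω|) μ ∧
      Measure.map V P = Measure.map (fun ω => |g ω| * Y ω) ν ∧
      ∀ᵐ ω ∂P, U ω ≤ (8 * L) ^ (1 / r) *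
        ((Real.log (K / (Real.sqrt (2 / Real.pi) * Real.exp (-2))) / 4) ^ (1 / r)
          + V ω) := by
  have hK : 1 ≤ K := by simpa [zero_rpow hr0.ne'] using hZtail 0 le_rfl
  have hcK : gaussianTailConst ≤ K :=
    (gaussianTailConst_le_exp_neg_one.trans (exp_le_one_iff.2 (by norm_num))).trans hK
  have hZ : Measurable fun ω => |Z ω| := hZmeas.abs
  have hgY : Measurable fun ω => |g ω| * Y ω := hgmeas.abs.mul hYmeas
  have := Measure.isProbabilityMeasure_map hZ.aemeasurable (μ := μ)
  have := Measure.isProbabilityMeasure_map hgY.aemeasurable (μ := ν)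
  refine exists_coupling_le_of_measure_Ioi_le _ _
    (f := fun t => (8 * L) ^ (1 / r) * ((log (K / gaussianTailConst) / 4) ^ (1 / r) + t))
    fun t => ?_
  rw [Measure.map_apply hZ measurableSet_Ioi, Measure.map_apply hgY measurableSet_Ioi]
  rcases lt_or_ge t 0 with ht | ht
  · have hall : (fun ω => |g ω| * Y ω) ⁻¹' Ioi t = univ :=
      eq_univ_of_forall fun ω => ht.trans_le (mul_nonneg (abs_nonneg _) (hY0 ω))
    rw [hall, measure_univ]
    exact prob_le_one
  have hc := gaussianTailConst_pos
  set x := (8 * L) ^ (1 / r) * ((log (K / gaussianTailConst) / 4) ^ (1 / r) + t)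
  have hx : 0 ≤ x := by
    have := log_nonneg ((one_le_div hc).2 hcK)
    positivity
  calc _ ≤ μ {ω | x ≤ |Z ω|} := measure_mono fun ω (hω : x < |Z ω|) => hω.le
    _ ≤ ENNReal.ofReal (K * exp (-x ^ r / L)) := hZtail x hx
    _ ≤ ENNReal.ofReal (gaussianTailConst * exp (-(2 * t ^ r))) := by
        refine ENNReal.ofReal_le_ofReal ((mul_exp_neg_rpow_le hr0 hL hc hcK ht).trans ?_)
        gcongr
        linarith [rpow_nonneg ht r]
    _ ≤ _ := ofReal_le_measure_lt_abs_mul hgmeas hg hindep hr0 hcase ht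

/-- Coupling lemma: if `P(|Z| ≥ t) ≤ K e^{-t^r/L}` and `|g| Y` is as in the previous
lemma (`g ~ N(0,1)` independent of a Weibull variable `Y` of shape `s`,
`1/s = 1/r - 1/2`, with `Y ≡ 1` when `r = 2`), then on a common probability space
there are `U ~ |Z|` and `V ~ |g| Y` with
`U ≤ (8L)^{1/r} ((ln(K/c)/4)^{1/r} + V)` a.s., where `c = √(2/π) e^{-2}`. -/
theorem stmt9 (K L r : ℝ) (hK : 0 < K) (hL : 0 < L) (hr0 : 0 < r) (hr2 : r ≤ 2)
    {Ω₁ : Type*} [MeasurableSpace Ω₁] (μ : Measure Ω₁) [IsProbabilityMeasure μ]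
    (Z : Ω₁ → ℝ) (hZmeas : Measurable Z)
    (hZtail : ∀ t : ℝ, 0 ≤ t →
      μ {ω | t ≤ |Z ω|} ≤ ENNReal.ofReal (K * Real.exp (-t ^ r / L)))
    {Ω₂ : Type*} [MeasurableSpace Ω₂] (ν : Measure Ω₂) [IsProbabilityMeasure ν]
    (g Y : Ω₂ → ℝ) (hgmeas : Measurable g) (hYmeas : Measurable Y)
    (hY0 : ∀ ω, 0 ≤ Y ω)
    (hg : Measure.map g ν = gaussianReal 0 1)
    (hindep : IndepFun g Y ν)
    (s : ℝ)
    (hcase : (r < 2 ∧ 1 / s = 1 / r - 1 / 2 ∧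
        ∀ t : ℝ, 0 ≤ t → ν {ω | t ≤ Y ω} = ENNReal.ofReal (Real.exp (-t ^ s)))
      ∨ (r = 2 ∧ ∀ᵐ ω ∂ν, Y ω = 1)) :
    ∃ (Ω : Type) (_ : MeasurableSpace Ω) (P : Measure Ω) (_ : IsProbabilityMeasure P)
      (U V : Ω → ℝ), Measurable U ∧ Measurable V ∧
      Measure.map U P = Measure.map (fun ω => |Z ω|) μ ∧
      Measure.map V P = Measure.map (fun ω => |g ω| * Y ω) ν ∧
      ∀ᵐ ω ∂P, U ω ≤ (8 * L) ^ (1 / r) *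
        ((Real.log (K / (Real.sqrt (2 / Real.pi) * Real.exp (-2))) / 4) ^ (1 / r)
          + V ω) :=
  stmt9_general K L r hL hr0 μ Z hZmeas hZtail ν g Y hgmeas hYmeas hY0 hg hindep s hcase
end

section
/- Let X be an m×n random matrix with independent mean-zero ±1-valued (or more generally [−1,1]-valued) entries, and let (b_j)_{j≤n} be reals. Suppose t₀ satisfies |∑_{j≤n} b_j X_{ij}| ≤ t₀ almost surely. Then for all q ≥ 2 and 0 ≤ t ≤ t₀^{2−q}/(4 ∑_j b_j²), E exp(t |∑_j b_j X_{ij}|^q) ≤ 1 + C(q)^q t (∑_j b_j²)^{q/2}, where C(q) = 2(q Γ(q/2))^{1/q}. -/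
/-!
By Hoeffding's lemma each `b_j X_j` is sub-Gaussian with variance proxy `b_j²`, so by
independence `S = ∑ b_j X_j` is sub-Gaussian with proxy `σ² = ∑ b_j²`, and
`P(|S| ≥ s) ≤ 2 exp(-s²/(2σ²))`. The layer-cake formula gives
`E exp(t|S|^q) = 1 + ∫₀^∞ P(|S| ≥ s) t q s^(q-1) exp(t s^q) ds`. Only `s ≤ t₀` contributes,
and there the constraint on `t` gives `t s^q ≤ s²/(4σ²)`, so the integrand is at most
`2 t q s^(q-1) exp(-s²/(4σ²))`, whose integral is the Gamma integral
`q Γ(q/2) t (4σ²)^(q/2) = C(q)^q t σ^q`.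
-/

open MeasureTheory ProbabilityTheory Real Set
open scoped ENNReal NNReal

lemma mul_rpow_le_mul_sq_of_le {s t₀ q t c : ℝ} (hs : 0 < s) (hst : s ≤ t₀) (hq : 2 ≤ q)
    (ht0 : 0 ≤ t) (ht : t ≤ t₀ ^ (2 - q) * c) : t * s ^ q ≤ c * s ^ 2 := by
  have ht₀ : 0 < t₀ := hs.trans_le hst
  calc t * s ^ q = t * s ^ (q - 2) * s ^ 2 := by
        rw [mul_assoc, ← rpow_two, ← rpow_add hs, sub_add_cancel]
    _ ≤ t₀ ^ (2 - q) * c * t₀ ^ (q - 2) * s ^ 2 := by gcongr; linarith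
    _ = c * s ^ 2 := by
        rw [mul_right_comm _ c, ← rpow_add ht₀, sub_add_sub_cancel', sub_self, rpow_zero, one_mul]

lemma integral_rpow_sub_one_mul_exp_neg_sq_div {q c : ℝ} (hq : 0 < q) (hc : 0 < c) :
    ∫ s in Ioi 0, s ^ (q - 1) * exp (-s ^ 2 / c) = c ^ (q / 2) * Gamma (q / 2) / 2 := by
  have h := integral_rpow_mul_exp_neg_mul_rpow two_pos (by linarith : -1 < q - 1) (inv_pos.2 hc)
  rw [sub_add_cancel, neg_div, rpow_neg (inv_pos.2 hc).le, inv_rpow hc.le, inv_inv] at h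
  rw [show c ^ (q / 2) * Gamma (q / 2) / 2 = c ^ (q / 2) * (1 / 2) * Gamma (q / 2) by ring, ← h]
  refine setIntegral_congr_fun measurableSet_Ioi fun s _ ↦ ?_
  rw [rpow_two, neg_mul, inv_mul_eq_div, neg_div]

lemma continuous_mul_rpow_sub_one_mul_exp {q t : ℝ} (hq : 1 ≤ q) :
    Continuous fun u : ℝ ↦ t * q * u ^ (q - 1) * exp (t * u ^ q) := by
  have := continuous_rpow_const (by linarith : (0 : ℝ) ≤ q - 1)
  have := continuous_rpow_const (by linarith : (0 : ℝ) ≤ q)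
  fun_prop

lemma intervalIntegral_mul_rpow_sub_one_mul_exp {q t : ℝ} (hq : 1 ≤ q) (x : ℝ) :
    ∫ u in (0 : ℝ)..x, t * q * u ^ (q - 1) * exp (t * u ^ q) = exp (t * x ^ q) - 1 := by
  have hderiv : ∀ u ∈ uIcc 0 x,
      HasDerivAt (fun y ↦ exp (t * y ^ q)) (t * q * u ^ (q - 1) * exp (t * u ^ q)) u := by
    intro u _
    convert ((hasDerivAt_rpow_const (Or.inr hq)).const_mul t).exp using 1
    ring
  rw [intervalIntegral.integral_eq_sub_of_hasDerivAt hderiv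
    ((continuous_mul_rpow_sub_one_mul_exp hq).intervalIntegrable _ _), zero_rpow (by linarith),
    mul_zero, exp_zero]

namespace ProbabilityTheory

variable {Ω : Type*} [MeasurableSpace Ω] {μ : Measure Ω}

lemma hasSubgaussianMGF_of_abs_le_one [IsProbabilityMeasure μ] {Y : Ω → ℝ}
    (hY : AEMeasurable Y μ) (hbdd : ∀ᵐ ω ∂μ, |Y ω| ≤ 1) (hmean : μ[Y] = 0) :
    HasSubgaussianMGF Y 1 μ := by
  convert hasSubgaussianMGF_of_mem_Icc_of_integral_eq_zero hY (a := -1) (b := 1)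
    (by filter_upwards [hbdd] with ω hω using abs_le.1 hω) hmean
  ext; norm_num

lemma hasSubgaussianMGF_sum_mul [IsProbabilityMeasure μ] {ι : Type*} [Fintype ι]
    {X : ι → Ω → ℝ} (hX : ∀ j, Measurable (X j)) (hindep : iIndepFun X μ)
    (hbdd : ∀ j, ∀ᵐ ω ∂μ, |X j ω| ≤ 1) (hmean : ∀ j, μ[X j] = 0) (b : ι → ℝ) :
    HasSubgaussianMGF (fun ω ↦ ∑ j, b j * X j ω) (∑ j, ‖b j‖₊ ^ 2) μ := by
  refine HasSubgaussianMGF.sum_of_iIndepFun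
    (hindep.comp (fun j x ↦ b j * x) fun j ↦ measurable_const_mul (b j)) fun j _ ↦ ?_
  have h := (hasSubgaussianMGF_of_abs_le_one (hX j).aemeasurable (hbdd j) (hmean j)).const_mul (b j)
  convert h using 1 <;> ext
  · rfl
  · simp only [NNReal.coe_pow, coe_nnnorm, norm_eq_abs, sq_abs]
    -- `const_mul` writes its parameter as a bare subtype, out of reach of `NNReal.coe_mul`
    exact (mul_one _).symm

lemma HasSubgaussianMGF.measure_abs_ge_le [IsFiniteMeasure μ] {X : Ω → ℝ} {c : ℝ≥0}
    (h : HasSubgaussianMGF X c μ) {ε : ℝ} (hε : 0 ≤ ε) :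
    μ {ω | ε ≤ |X ω|} ≤ ENNReal.ofReal (2 * exp (-ε ^ 2 / (2 * c))) := by
  have hsplit : {ω | ε ≤ |X ω|} = {ω | ε ≤ X ω} ∪ {ω | ε ≤ (-X) ω} := by
    ext ω; simp [le_abs]
  rw [← ofReal_measureReal (measure_ne_top μ _)]
  refine ENNReal.ofReal_le_ofReal ?_
  calc μ.real {ω | ε ≤ |X ω|} ≤ μ.real {ω | ε ≤ X ω} + μ.real {ω | ε ≤ (-X) ω} := by
        rw [hsplit]; exact measureReal_union_le _ _
    _ ≤ 2 * exp (-ε ^ 2 / (2 * c)) := by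
        linarith [h.measure_ge_le hε, h.neg.measure_ge_le hε]

lemma lintegral_exp_mul_rpow_eq_one_add [IsProbabilityMeasure μ] {Y : Ω → ℝ}
    (hY : AEMeasurable Y μ) (hY0 : 0 ≤ᵐ[μ] Y) {q t : ℝ} (hq : 1 ≤ q) (ht : 0 ≤ t) :
    ∫⁻ ω, ENNReal.ofReal (exp (t * Y ω ^ q)) ∂μ =
      1 + ∫⁻ s in Ioi 0, μ {ω | s ≤ Y ω} *
        ENNReal.ofReal (t * q * s ^ (q - 1) * exp (t * s ^ q)) := by
  have hnonneg : ∀ᵐ s ∂volume.restrict (Ioi 0), 0 ≤ t * q * s ^ (q - 1) * exp (t * s ^ q) := by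
    refine (ae_restrict_iff' measurableSet_Ioi).2 (ae_of_all _ fun s (hs : 0 < s) ↦ ?_)
    have : 0 ≤ q := by linarith
    positivity
  rw [← lintegral_comp_eq_lintegral_meas_le_mul μ hY0 hY (fun _ _ ↦
    (continuous_mul_rpow_sub_one_mul_exp hq).intervalIntegrable _ _) hnonneg]
  calc _ = ∫⁻ ω, 1 + ENNReal.ofReal (∫ u in (0 : ℝ)..Y ω,
          t * q * u ^ (q - 1) * exp (t * u ^ q)) ∂μ := ?_
    _ = _ := by rw [lintegral_add_left measurable_const, lintegral_one, measure_univ]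
  refine lintegral_congr_ae (hY0.mono fun ω (hω : 0 ≤ Y ω) ↦ ?_)
  dsimp only
  rw [intervalIntegral_mul_rpow_sub_one_mul_exp hq, ← ENNReal.ofReal_one,
    ← ENNReal.ofReal_add zero_le_one (sub_nonneg.2 (one_le_exp (by positivity))), add_sub_cancel]

lemma measure_ge_mul_ofReal_le {Y : Ω → ℝ} {c t₀ q t s : ℝ} (hc : 0 < c)
    (htail : μ {ω | s ≤ Y ω} ≤ ENNReal.ofReal (2 * exp (-s ^ 2 / (2 * c))))
    (hY_le : ∀ᵐ ω ∂μ, Y ω ≤ t₀) (hq : 2 ≤ q) (ht0 : 0 ≤ t)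
    (ht : t ≤ t₀ ^ (2 - q) / (4 * c)) (hs : 0 < s) :
    μ {ω | s ≤ Y ω} * ENNReal.ofReal (t * q * s ^ (q - 1) * exp (t * s ^ q)) ≤
      ENNReal.ofReal (2 * t * q * (s ^ (q - 1) * exp (-s ^ 2 / (4 * c)))) := by
  by_cases hst : s ≤ t₀
  · have hexp : -s ^ 2 / (2 * c) + t * s ^ q ≤ -s ^ 2 / (4 * c) := by
      have := mul_rpow_le_mul_sq_of_le hs hst hq ht0 (by rwa [← div_eq_mul_one_div])
      field_simp at this ⊢
      linarith
    calc _ ≤ ENNReal.ofReal (2 * exp (-s ^ 2 / (2 * c))) *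
          ENNReal.ofReal (t * q * s ^ (q - 1) * exp (t * s ^ q)) := by gcongr
      _ = ENNReal.ofReal (2 * t * q * s ^ (q - 1) * exp (-s ^ 2 / (2 * c) + t * s ^ q)) := by
          rw [← ENNReal.ofReal_mul (by positivity), exp_add]; ring_nf
      _ ≤ _ := by
          rw [← mul_assoc]
          gcongr
  · have hnull : μ {ω | s ≤ Y ω} = 0 :=
      measure_mono_null (fun ω hω ↦ not_le.2 ((not_le.1 hst).trans_le hω)) (ae_iff.1 hY_le)
    rw [hnull, zero_mul]
    exact zero_le

lemma lintegral_exp_mul_rpow_le_of_tail_le [IsProbabilityMeasure μ] {Y : Ω → ℝ}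
    (hY : AEMeasurable Y μ) (hY0 : 0 ≤ᵐ[μ] Y) {c t₀ q t : ℝ} (hc : 0 < c)
    (htail : ∀ s > 0, μ {ω | s ≤ Y ω} ≤ ENNReal.ofReal (2 * exp (-s ^ 2 / (2 * c))))
    (hY_le : ∀ᵐ ω ∂μ, Y ω ≤ t₀) (hq : 2 ≤ q) (ht0 : 0 ≤ t)
    (ht : t ≤ t₀ ^ (2 - q) / (4 * c)) :
    ∫⁻ ω, ENNReal.ofReal (exp (t * Y ω ^ q)) ∂μ ≤
      ENNReal.ofReal (1 + q * Gamma (q / 2) * t * (4 * c) ^ (q / 2)) := by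
  have hq0 : 0 < q := by linarith
  set h : ℝ → ℝ := fun s ↦ 2 * t * q * (s ^ (q - 1) * exp (-s ^ 2 / (4 * c))) with h_def
  have hdom : ∀ s ∈ Ioi (0 : ℝ), μ {ω | s ≤ Y ω} *
      ENNReal.ofReal (t * q * s ^ (q - 1) * exp (t * s ^ q)) ≤ ENNReal.ofReal (h s) :=
    fun s hs ↦ measure_ge_mul_ofReal_le hc (htail s hs) hY_le hq ht0 ht hs
  have hh_int : IntegrableOn h (Ioi 0) := by
    refine (Integrable.const_mul ?_ _).integrableOn
    convert integrable_rpow_mul_exp_neg_mul_sq (inv_pos.2 (by positivity : 0 < 4 * c))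
      (by linarith : -1 < q - 1) using 4 with s
    ring
  have hh_nonneg : 0 ≤ᵐ[volume.restrict (Ioi 0)] h :=
    (ae_restrict_iff' measurableSet_Ioi).2 (ae_of_all _ fun s (hs : 0 < s) ↦ by positivity)
  have hh_integral : ∫ s in Ioi 0, h s = q * Gamma (q / 2) * t * (4 * c) ^ (q / 2) := by
    rw [h_def, integral_const_mul, integral_rpow_sub_one_mul_exp_neg_sq_div hq0 (by positivity)]
    ring
  calc _ = 1 + ∫⁻ s in Ioi 0, μ {ω | s ≤ Y ω} *
        ENNReal.ofReal (t * q * s ^ (q - 1) * exp (t * s ^ q)) :=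
        lintegral_exp_mul_rpow_eq_one_add hY hY0 (by linarith) ht0
    _ ≤ 1 + ∫⁻ s in Ioi 0, ENNReal.ofReal (h s) :=
        add_le_add_right (setLIntegral_mono' measurableSet_Ioi hdom) 1
    _ = _ := by
        rw [← ofReal_integral_eq_lintegral_ofReal hh_int hh_nonneg, hh_integral,
          ENNReal.ofReal_add zero_le_one (by positivity), ENNReal.ofReal_one]

end ProbabilityTheory

theorem stmt12_general {Ω : Type*} [MeasurableSpace Ω] (μ : Measure Ω) [IsProbabilityMeasure μ]
    (n : ℕ) (X : Fin n → Ω → ℝ)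
    (hmeas : ∀ j, Measurable (X j))
    (hindep : iIndepFun X μ)
    (hmean : ∀ j, ∫ ω, X j ω ∂μ = 0)
    (hbdd : ∀ j, ∀ᵐ ω ∂μ, |X j ω| ≤ 1)
    (b : Fin n → ℝ) (t₀ : ℝ)
    (ht₀ : ∀ᵐ ω ∂μ, |∑ j, b j * X j ω| ≤ t₀)
    (q t : ℝ) (hq : 2 ≤ q) (ht0 : 0 ≤ t)
    (ht : t ≤ t₀ ^ (2 - q) / (4 * ∑ j, b j ^ 2)) :
    ∫⁻ ω, ENNReal.ofReal (Real.exp (t * |∑ j, b j * X j ω| ^ q)) ∂μ ≤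
      ENNReal.ofReal (1 + (2 * (q * Real.Gamma (q / 2)) ^ (1 / q)) ^ q * t *
        (∑ j, b j ^ 2) ^ (q / 2)) := by
  rcases ht0.eq_or_lt with rfl | htpos
  · simp
  have hS := hasSubgaussianMGF_sum_mul hmeas hindep hbdd hmean b
  have hS_param : ((∑ j, ‖b j‖₊ ^ 2 : ℝ≥0) : ℝ) = ∑ j, b j ^ 2 := by push_cast; simp
  set σ2 := ∑ j, b j ^ 2
  have hσ2 : 0 < σ2 := by
    refine (Finset.sum_nonneg fun j _ ↦ sq_nonneg (b j)).lt_of_ne fun (h : 0 = σ2) ↦ ?_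
    rw [← h, mul_zero, div_zero] at ht
    linarith
  have hA : 0 ≤ q * Gamma (q / 2) := by
    have := Gamma_pos_of_pos (by linarith : 0 < q / 2); positivity
  have hconst : (2 * (q * Gamma (q / 2)) ^ (1 / q)) ^ q * t * σ2 ^ (q / 2) =
      q * Gamma (q / 2) * t * (4 * σ2) ^ (q / 2) := by
    rw [mul_rpow zero_le_two (rpow_nonneg hA _), ← rpow_mul hA, one_div_mul_cancel (by linarith),
      rpow_one, mul_rpow zero_le_four hσ2.le, show (4 : ℝ) = 2 ^ (2 : ℝ) by norm_num,
      ← rpow_mul zero_le_two, mul_div_cancel₀ _ two_ne_zero]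
    ring
  rw [hconst]
  refine lintegral_exp_mul_rpow_le_of_tail_le (Y := fun ω ↦ |∑ j, b j * X j ω|)
    hS.aemeasurable.abs (ae_of_all _ fun _ ↦ abs_nonneg _) hσ2 (fun s hs ↦ ?_) ht₀ hq ht0 ht
  rw [← hS_param]
  exact hS.measure_abs_ge_le hs.le

/-- MGF bound à la Bennett–Goodman–Newman: for independent mean-zero `[-1,1]`-valued
`X_j`, `|∑ b_j X_j| ≤ t₀` a.s., `q ≥ 2` and `0 ≤ t ≤ t₀^{2-q}/(4 ∑ b_j²)`,
`E exp(t |∑ b_j X_j|^q) ≤ 1 + C(q)^q t (∑ b_j²)^{q/2}` with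
`C(q) = 2 (q Γ(q/2))^{1/q}`. -/
theorem stmt12 {Ω : Type*} [MeasurableSpace Ω] (μ : Measure Ω) [IsProbabilityMeasure μ]
    (n : ℕ) (X : Fin n → Ω → ℝ)
    (hmeas : ∀ j, Measurable (X j))
    (hindep : iIndepFun X μ)
    (hint : ∀ j, Integrable (X j) μ)
    (hmean : ∀ j, ∫ ω, X j ω ∂μ = 0)
    (hbdd : ∀ j, ∀ᵐ ω ∂μ, |X j ω| ≤ 1)
    (b : Fin n → ℝ) (t₀ : ℝ)
    (ht₀ : ∀ᵐ ω ∂μ, |∑ j, b j * X j ω| ≤ t₀)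
    (q t : ℝ) (hq : 2 ≤ q) (ht0 : 0 ≤ t)
    (ht : t ≤ t₀ ^ (2 - q) / (4 * ∑ j, b j ^ 2)) :
    ∫⁻ ω, ENNReal.ofReal (Real.exp (t * |∑ j, b j * X j ω| ^ q)) ∂μ ≤
      ENNReal.ofReal (1 + (2 * (q * Real.Gamma (q / 2)) ^ (1 / q)) ^ q * t *
        (∑ j, b j ^ 2) ^ (q / 2)) :=
  stmt12_general μ n X hmeas hindep hmean hbdd b t₀ ht₀ q t hq ht0 ht
end

section
/- Let 1 ≤ q < p ≤ ∞ with q < 2, and let A be a real m×n matrix. Then ‖(A∘A)^T : ℓ_{q*/2}^m → ℓ_{p*/2}^n‖^{1/2} ≳_{p,q} max_{j≤n} √(ln(j+1)) · b_j^↓, where b_j = ‖(a_{ij})_{i≤m}‖_{2q/(2−q)} and (b_j^↓) is the non-increasing rearrangement of (b_j). -/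
open MeasureTheory ProbabilityTheory
open scoped ENNReal

/-!
Fix `k` and let `S` be the `k + 1` columns with the largest `b_j`. For `q > 1` the exponents
`r = q / (2 - q)` and `s = q* / 2` are Hölder conjugate and `b_j ^ 2 = ‖(a_ij ^ 2)_i‖_r`, so each
column has a unit vector `g_j` of `ℓ_s` with `⟪(a_ij ^ 2)_i, g_j⟫ = b_j ^ 2`. The `s`-power mean
`x` of the `g_j`, `j ∈ S`, is again a unit vector and dominates each `g_j` up to the factor
`(k + 1) ^ (-1/s)` (for `q = 1` take `x = 1`). Hence the `k + 1` coordinates of `(A∘A)ᵀ x`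
indexed by `S` all exceed `b_{σ k} ^ 2 (k + 1) ^ (-2/q*)`, so the operator norm is at least
`(k + 1) ^ (2/p* - 2/q*) b_{σ k} ^ 2`. The exponent `2/p* - 2/q* = 2/q - 2/p` is positive, and a
positive power of `k + 1` dominates a multiple of `log (k + 2)`.
-/

open Finset

namespace HadamardSquare

section lpNorm

variable {n : ℕ}

lemma lpNorm_of_ne_top {p : ℝ≥0∞} (hp : p ≠ ⊤) (x : Fin n → ℝ) :
    lpNorm p x = (∑ j, |x j| ^ p.toReal) ^ (1 / p.toReal) :=
  if_neg hp

lemma lpNorm_nonneg (p : ℝ≥0∞) (x : Fin n → ℝ) : 0 ≤ lpNorm p x := by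
  unfold _root_.lpNorm
  split
  · exact Real.iSup_nonneg fun j => abs_nonneg _
  · positivity

lemma lpNorm_le_lpNorm_of_abs_le {p : ℝ≥0∞} {x y : Fin n → ℝ} (h : ∀ j, |x j| ≤ |y j|) :
    lpNorm p x ≤ lpNorm p y := by
  by_cases hp : p = ⊤
  · simp only [_root_.lpNorm, if_pos hp]
    exact ciSup_mono (Set.finite_range _).bddAbove h
  · rw [lpNorm_of_ne_top hp, lpNorm_of_ne_top hp]
    exact Real.rpow_le_rpow (by positivity)
      (sum_le_sum fun j _ => Real.rpow_le_rpow (abs_nonneg _) (h j) ENNReal.toReal_nonneg)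
      (by positivity)

lemma abs_le_lpNorm {p : ℝ≥0∞} (hp : p ≠ 0) (x : Fin n → ℝ) (j : Fin n) :
    |x j| ≤ lpNorm p x := by
  by_cases htop : p = ⊤
  · rw [_root_.lpNorm, if_pos htop]
    exact le_ciSup (f := fun j => |x j|) (Set.finite_range _).bddAbove j
  have hp' : 0 < p.toReal := ENNReal.toReal_pos hp htop
  calc |x j| = (|x j| ^ p.toReal) ^ (1 / p.toReal) := by
        rw [← Real.rpow_mul (abs_nonneg _), mul_one_div_cancel hp'.ne', Real.rpow_one]
    _ ≤ lpNorm p x := by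
        rw [lpNorm_of_ne_top htop]
        gcongr
        exact single_le_sum (f := fun j => |x j| ^ p.toReal) (fun _ _ => by positivity)
          (mem_univ j)

lemma lpNorm_le_one {p : ℝ≥0∞} (hp : p ≠ ⊤) {x : Fin n → ℝ}
    (h : ∑ j, |x j| ^ p.toReal ≤ 1) : lpNorm p x ≤ 1 := by
  rw [lpNorm_of_ne_top hp]
  exact Real.rpow_le_one (by positivity) h (by positivity)

lemma lpNorm_top_one_le_one : lpNorm ⊤ (fun _ : Fin n => (1 : ℝ)) ≤ 1 := by
  rw [_root_.lpNorm, if_pos rfl]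
  exact Real.iSup_le (fun _ => by norm_num) zero_le_one

lemma lpNorm_ofReal_two_mul_sq {r : ℝ} (hr : 0 < r) (x : Fin n → ℝ) :
    lpNorm (ENNReal.ofReal (2 * r)) x ^ 2 = (∑ j, (x j ^ 2) ^ r) ^ r⁻¹ := by
  have hsq : ∀ j, |x j| ^ (2 * r) = (x j ^ 2) ^ r := fun j => by
    rw [Real.rpow_mul (abs_nonneg _), ← sq_abs, Real.rpow_two]
  rw [lpNorm_of_ne_top ENNReal.ofReal_ne_top, ENNReal.toReal_ofReal (by positivity),
    Finset.sum_congr rfl fun j _ => hsq j, ← Real.rpow_natCast, ← Real.rpow_mul (by positivity)]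
  congr 1
  field_simp
  norm_num

lemma card_rpow_mul_le_lpNorm {p : ℝ≥0∞} (hp0 : p ≠ 0) (hp : p ≠ ⊤) {x : Fin n → ℝ}
    {S : Finset (Fin n)} {c : ℝ} (hc : 0 ≤ c) (h : ∀ j ∈ S, c ≤ |x j|) :
    (#S : ℝ) ^ (1 / p.toReal) * c ≤ lpNorm p x := by
  have hp' : 0 < p.toReal := ENNReal.toReal_pos hp0 hp
  have hsum : (#S : ℝ) * c ^ p.toReal ≤ ∑ j, |x j| ^ p.toReal :=
    calc (#S : ℝ) * c ^ p.toReal = ∑ _j ∈ S, c ^ p.toReal := by rw [sum_const, nsmul_eq_mul]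
      _ ≤ ∑ j ∈ S, |x j| ^ p.toReal := sum_le_sum fun j hj => by gcongr; exact h j hj
      _ ≤ ∑ j, |x j| ^ p.toReal :=
        sum_le_sum_of_subset_of_nonneg (subset_univ S) fun _ _ _ => by positivity
  calc (#S : ℝ) ^ (1 / p.toReal) * c = ((#S : ℝ) * c ^ p.toReal) ^ (1 / p.toReal) := by
        rw [Real.mul_rpow (by positivity) (by positivity), ← Real.rpow_mul hc,
          mul_one_div_cancel hp'.ne', Real.rpow_one]
    _ ≤ lpNorm p x := by
        rw [lpNorm_of_ne_top hp]
        gcongr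

end lpNorm

section opNorm

variable {m n : ℕ}

lemma le_opNorm {s : ℝ≥0∞} (hs : s ≠ 0) (u : ℝ≥0∞) (B : Fin m → Fin n → ℝ)
    {x : Fin n → ℝ} (hx : lpNorm s x ≤ 1) :
    lpNorm u (fun i => ∑ j, B i j * x j) ≤ opNorm s u B := by
  refine le_csSup ⟨lpNorm u (fun i => ∑ j, |B i j|), ?_⟩ ⟨x, hx, rfl⟩
  rintro _ ⟨y, hy, rfl⟩
  refine lpNorm_le_lpNorm_of_abs_le fun i => ?_
  calc |∑ j, B i j * y j| ≤ ∑ j, |B i j| * |y j| := by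
        simpa only [abs_mul] using abs_sum_le_sum_abs (fun j => B i j * y j) univ
    _ ≤ ∑ j, |B i j| := sum_le_sum fun j _ =>
        mul_le_of_le_one_right (abs_nonneg _) ((abs_le_lpNorm hs y j).trans hy)
    _ ≤ abs (∑ j, |B i j|) := le_abs_self _

lemma card_rpow_mul_le_opNorm {s u : ℝ≥0∞} (hs : s ≠ 0) (hu0 : u ≠ 0) (hu : u ≠ ⊤)
    (B : Fin m → Fin n → ℝ) {x : Fin n → ℝ} (hx : lpNorm s x ≤ 1) {S : Finset (Fin m)}
    {c : ℝ} (hc : 0 ≤ c) (h : ∀ i ∈ S, c ≤ ∑ j, B i j * x j) :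
    (#S : ℝ) ^ (1 / u.toReal) * c ≤ opNorm s u B :=
  (card_rpow_mul_le_lpNorm hu0 hu hc fun i hi => (h i hi).trans (le_abs_self _)).trans
    (le_opNorm hs u B hx)

end opNorm

section HolderDual

variable {m : ℕ}

/-- The extremal vector of Hölder's inequality for `v ≥ 0`, normalised in `ℓ_s` with `s` conjugate
to `r`; it is `0` when `v = 0`, through division by zero. -/
noncomputable def holderDual (r : ℝ) (v : Fin m → ℝ) : Fin m → ℝ :=
  fun i => v i ^ (r - 1) / (∑ k, v k ^ r) ^ (1 - r⁻¹)

lemma holderDual_nonneg (r : ℝ) {v : Fin m → ℝ} (hv : ∀ i, 0 ≤ v i) (i : Fin m) :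
    0 ≤ holderDual r v i :=
  div_nonneg (Real.rpow_nonneg (hv i) _)
    (Real.rpow_nonneg (sum_nonneg fun k _ => Real.rpow_nonneg (hv k) r) _)

lemma sum_holderDual_rpow_le_one {r s : ℝ} (hrs : r.HolderConjugate s) {v : Fin m → ℝ}
    (hv : ∀ i, 0 ≤ v i) : ∑ i, holderDual r v i ^ s ≤ 1 := by
  have hT : 0 ≤ ∑ k, v k ^ r := sum_nonneg fun k _ => Real.rpow_nonneg (hv k) r
  have hterm (i : Fin m) : holderDual r v i ^ s = v i ^ r / ∑ k, v k ^ r := by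
    rw [holderDual, Real.div_rpow (Real.rpow_nonneg (hv i) _) (Real.rpow_nonneg hT _),
      ← Real.rpow_mul (hv i), ← Real.rpow_mul hT, hrs.sub_one_mul_conj, hrs.one_sub_inv,
      inv_mul_cancel₀ hrs.symm.ne_zero, Real.rpow_one]
  rw [sum_congr rfl fun i _ => hterm i, ← sum_div]
  exact div_self_le_one _

lemma sum_mul_holderDual {r : ℝ} (hr : r ≠ 0) {v : Fin m → ℝ} (hv : ∀ i, 0 ≤ v i) :
    ∑ i, v i * holderDual r v i = (∑ i, v i ^ r) ^ r⁻¹ := by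
  have hT : 0 ≤ ∑ k, v k ^ r := sum_nonneg fun k _ => Real.rpow_nonneg (hv k) r
  have hterm (i : Fin m) : v i * holderDual r v i = v i ^ r / (∑ k, v k ^ r) ^ (1 - r⁻¹) := by
    rw [holderDual, mul_div_assoc', ← Real.rpow_one_add' (hv i) (by simpa using hr)]
    ring_nf
  rw [sum_congr rfl fun i _ => hterm i, ← sum_div]
  conv_rhs => rw [← sub_sub_cancel 1 r⁻¹, Real.rpow_sub' hT (by simpa using hr), Real.rpow_one]

end HolderDual

section PowerMean

variable {m : ℕ} {ι : Type*}

noncomputable def powerMean (s : ℝ) (S : Finset ι) (g : ι → Fin m → ℝ) : Fin m → ℝ :=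
  fun i => ((∑ j ∈ S, g j i ^ s) / #S) ^ s⁻¹

lemma powerMean_nonneg (s : ℝ) (S : Finset ι) {g : ι → Fin m → ℝ}
    (hg : ∀ j i, 0 ≤ g j i) (i : Fin m) : 0 ≤ powerMean s S g i :=
  Real.rpow_nonneg
    (div_nonneg (sum_nonneg fun j _ => Real.rpow_nonneg (hg j i) s) (Nat.cast_nonneg _)) _

lemma sum_powerMean_rpow_le_one {s : ℝ} (hs : s ≠ 0) (S : Finset ι) {g : ι → Fin m → ℝ}
    (hg : ∀ j i, 0 ≤ g j i) (h : ∀ j ∈ S, ∑ i, g j i ^ s ≤ 1) :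
    ∑ i, powerMean s S g i ^ s ≤ 1 := by
  have hterm : ∀ i, powerMean s S g i ^ s = (∑ j ∈ S, g j i ^ s) / #S := fun i =>
    Real.rpow_inv_rpow (div_nonneg (sum_nonneg fun j _ => Real.rpow_nonneg (hg j i) s)
      (Nat.cast_nonneg _)) hs
  rw [sum_congr rfl fun i _ => hterm i, ← sum_div, sum_comm]
  refine div_le_one_of_le₀ ?_ (Nat.cast_nonneg _)
  simpa using sum_le_sum h

lemma div_card_rpow_le_powerMean {s : ℝ} (hs : 0 < s) {S : Finset ι} {g : ι → Fin m → ℝ}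
    (hg : ∀ j i, 0 ≤ g j i) {j : ι} (hj : j ∈ S) (i : Fin m) :
    g j i / (#S : ℝ) ^ s⁻¹ ≤ powerMean s S g i := by
  calc g j i / (#S : ℝ) ^ s⁻¹ = (g j i ^ s / #S) ^ s⁻¹ := by
        rw [Real.div_rpow (Real.rpow_nonneg (hg j i) s) (Nat.cast_nonneg _),
          Real.rpow_rpow_inv (hg j i) hs.ne']
    _ ≤ powerMean s S g i :=
        Real.rpow_le_rpow (div_nonneg (Real.rpow_nonneg (hg j i) s) (Nat.cast_nonneg _))
          (div_le_div_of_nonneg_right (single_le_sum (f := fun j => g j i ^ s)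
            (fun j _ => Real.rpow_nonneg (hg j i) s) hj) (Nat.cast_nonneg _))
          (inv_nonneg.2 hs.le)

end PowerMean

lemma toReal_inv_add_toReal_inv {a b : ℝ≥0∞} (h : a⁻¹ + b⁻¹ = 1) :
    a.toReal⁻¹ + b.toReal⁻¹ = 1 := by
  have ha : a⁻¹ ≠ ⊤ := ne_top_of_le_ne_top ENNReal.one_ne_top (h ▸ le_self_add)
  have hb : b⁻¹ ≠ ⊤ := ne_top_of_le_ne_top ENNReal.one_ne_top (h ▸ le_add_self)
  rw [← ENNReal.toReal_inv, ← ENNReal.toReal_inv, ← ENNReal.toReal_add ha hb, h,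
    ENNReal.toReal_one]

lemma eq_ofReal_conjExponent {q : ℝ} (hq : 1 < q) {qstar : ℝ≥0∞}
    (hqconj : (ENNReal.ofReal q)⁻¹ + qstar⁻¹ = 1) :
    qstar = ENNReal.ofReal (Real.conjExponent q) := by
  have h := (Real.HolderConjugate.conjExponent hq).inv_add_inv_ennreal
  rw [← h, ENNReal.add_right_inj (by simpa using zero_lt_one.trans hq)] at hqconj
  exact inv_injective hqconj

lemma two_div_toReal_sub_two_div_toReal_pos {q : ℝ} (hq : 0 < q) {p pstar qstar : ℝ≥0∞}
    (hqp : ENNReal.ofReal q < p) (hpconj : p⁻¹ + pstar⁻¹ = 1)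
    (hqconj : (ENNReal.ofReal q)⁻¹ + qstar⁻¹ = 1) :
    0 < 2 / pstar.toReal - 2 / qstar.toReal := by
  have hpR := toReal_inv_add_toReal_inv hpconj
  have hqR := toReal_inv_add_toReal_inv hqconj
  rw [ENNReal.toReal_ofReal hq.le] at hqR
  have hpq : p.toReal⁻¹ < q⁻¹ := by
    rcases eq_or_ne p ⊤ with rfl | hp
    · simpa using hq
    · exact inv_strictAnti₀ hq ((ENNReal.ofReal_lt_iff_lt_toReal hq.le hp).1 hqp)
  simp only [div_eq_mul_inv]
  linarith

section TestVectors

variable {m n : ℕ}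

lemma exists_sq_lpNorm_div_le_of_holderConjugate {r s : ℝ} (hrs : r.HolderConjugate s)
    (A : Fin m → Fin n → ℝ) (S : Finset (Fin n)) :
    ∃ x : Fin m → ℝ, lpNorm (ENNReal.ofReal s) x ≤ 1 ∧ ∀ j ∈ S,
      lpNorm (ENNReal.ofReal (2 * r)) (fun i => A i j) ^ 2 / (#S : ℝ) ^ s⁻¹ ≤
        ∑ i, A i j ^ 2 * x i := by
  set g : Fin n → Fin m → ℝ := fun j => holderDual r (fun i => A i j ^ 2)
  have hg : ∀ j i, 0 ≤ g j i := fun j => holderDual_nonneg r fun i => sq_nonneg _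
  refine ⟨powerMean s S g, ?_, fun j hj => ?_⟩
  · refine lpNorm_le_one ENNReal.ofReal_ne_top ?_
    simp only [ENNReal.toReal_ofReal hrs.symm.nonneg,
      abs_of_nonneg (powerMean_nonneg s S hg _)]
    exact sum_powerMean_rpow_le_one hrs.symm.ne_zero S hg
      fun j _ => sum_holderDual_rpow_le_one hrs fun i => sq_nonneg _
  · calc lpNorm (ENNReal.ofReal (2 * r)) (fun i => A i j) ^ 2 / (#S : ℝ) ^ s⁻¹
        = ∑ i, A i j ^ 2 * (g j i / (#S : ℝ) ^ s⁻¹) := by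
          simp only [lpNorm_ofReal_two_mul_sq hrs.pos, mul_div_assoc', ← sum_div, g,
            sum_mul_holderDual hrs.ne_zero fun i => sq_nonneg (A i j)]
      _ ≤ ∑ i, A i j ^ 2 * powerMean s S g i := sum_le_sum fun i _ =>
          mul_le_mul_of_nonneg_left (div_card_rpow_le_powerMean hrs.symm.pos hg hj i)
            (sq_nonneg _)

/-- For `q = 1`, `qstar = ⊤` has `toReal = 0`, so the exponent `2 / qstar.toReal` is `0`. -/
lemma exists_sq_lpNorm_div_le {q : ℝ} {qstar : ℝ≥0∞} (hq1 : 1 ≤ q) (hq2 : q < 2)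
    (hqconj : (ENNReal.ofReal q)⁻¹ + qstar⁻¹ = 1) (A : Fin m → Fin n → ℝ)
    (S : Finset (Fin n)) :
    ∃ x : Fin m → ℝ, lpNorm (qstar / 2) x ≤ 1 ∧ ∀ j ∈ S,
      lpNorm (ENNReal.ofReal (2 * q / (2 - q))) (fun i => A i j) ^ 2 /
        (#S : ℝ) ^ (2 / qstar.toReal) ≤ ∑ i, A i j ^ 2 * x i := by
  rcases hq1.eq_or_lt with rfl | hq1
  · obtain rfl : qstar = ⊤ := by simpa using hqconj
    refine ⟨fun _ => 1, ?_, fun j _ => ?_⟩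
    · rw [ENNReal.top_div_of_ne_top ENNReal.ofNat_ne_top]
      exact lpNorm_top_one_le_one
    · rw [ENNReal.toReal_top, div_zero, Real.rpow_zero, div_one,
        show 2 * 1 / (2 - 1) = (2 : ℝ) * 1 by norm_num]
      simpa using (lpNorm_ofReal_two_mul_sq one_pos fun i => A i j).le
  · have hrs : (q / (2 - q)).HolderConjugate (Real.conjExponent q / 2) := by
      refine Real.holderConjugate_iff.2 ⟨(one_lt_div (by linarith)).2 (by linarith), ?_⟩
      rw [Real.conjExponent]
      field_simp
      ring
    obtain ⟨x, hx, hxS⟩ := exists_sq_lpNorm_div_le_of_holderConjugate hrs A S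
    rw [eq_ofReal_conjExponent hq1 hqconj,
      ENNReal.toReal_ofReal (Real.HolderConjugate.conjExponent hq1).symm.nonneg,
      ← inv_div (Real.conjExponent q) 2, mul_div_assoc]
    refine ⟨x, ?_, fun j hj => ?_⟩
    · simpa [ENNReal.ofReal_div_of_pos] using hx
    · simpa using hxS j hj

lemma rpow_mul_sq_lpNorm_le_opNorm {q : ℝ} {qstar u : ℝ≥0∞} (hq1 : 1 ≤ q) (hq2 : q < 2)
    (hqconj : (ENNReal.ofReal q)⁻¹ + qstar⁻¹ = 1) (hu0 : u ≠ 0) (hu : u ≠ ⊤)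
    (A : Fin m → Fin n → ℝ) (σ : Equiv.Perm (Fin n))
    (hσ : Antitone fun j => lpNorm (ENNReal.ofReal (2 * q / (2 - q))) (fun i => A i (σ j)))
    (k : Fin n) :
    ((k : ℕ) + 1 : ℝ) ^ (1 / u.toReal - 2 / qstar.toReal) *
        lpNorm (ENNReal.ofReal (2 * q / (2 - q))) (fun i => A i (σ k)) ^ 2 ≤
      opNorm (qstar / 2) u (fun j i => A i j ^ 2) := by
  set b : Fin n → ℝ := fun j => lpNorm (ENNReal.ofReal (2 * q / (2 - q))) (fun i => A i j)
  set S : Finset (Fin n) := (Iic k).map σ.toEmbedding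
  set K : ℝ := (k : ℕ) + 1
  have hS : (#S : ℝ) = K := by simp [S, K]
  have hs : qstar / 2 ≠ 0 := by
    refine ENNReal.div_ne_zero.2 ⟨?_, ENNReal.ofNat_ne_top⟩
    rintro rfl
    simp at hqconj
  obtain ⟨x, hx, hxS⟩ := exists_sq_lpNorm_div_le hq1 hq2 hqconj A S
  have hlow : ∀ j ∈ S,
      b (σ k) ^ 2 / (#S : ℝ) ^ (2 / qstar.toReal) ≤ ∑ i, A i j ^ 2 * x i := by
    intro j hj
    obtain ⟨j', hj', rfl⟩ := mem_map.1 hj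
    refine le_trans ?_ (hxS _ hj)
    gcongr
    · exact lpNorm_nonneg _ _
    · exact hσ (mem_Iic.1 hj')
  calc K ^ (1 / u.toReal - 2 / qstar.toReal) * b (σ k) ^ 2
      = K ^ (1 / u.toReal) * (b (σ k) ^ 2 / K ^ (2 / qstar.toReal)) := by
        rw [Real.rpow_sub (by positivity)]
        ring
    _ ≤ opNorm (qstar / 2) u (fun j i => A i j ^ 2) := hS ▸
        card_rpow_mul_le_opNorm hs hu0 hu (fun j i => A i j ^ 2) hx (by positivity) hlow

end TestVectors

lemma log_add_two_le {δ : ℝ} (hδ : 0 < δ) (k : ℕ) :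
    Real.log (k + 2) ≤ 2 ^ δ / δ * ((k : ℝ) + 1) ^ δ :=
  calc Real.log (k + 2) ≤ ((k : ℝ) + 2) ^ δ / δ := Real.log_le_rpow_div (by positivity) hδ
    _ ≤ (2 * ((k : ℝ) + 1)) ^ δ / δ := by gcongr; linarith
    _ = 2 ^ δ / δ * ((k : ℝ) + 1) ^ δ := by
        rw [Real.mul_rpow zero_le_two (by positivity)]
        ring

lemma mul_iSup_sqrt_log_mul_le_sqrt {n : ℕ} {δ M : ℝ} (hδ : 0 < δ) {t : Fin n → ℝ}
    (h : ∀ k : Fin n, ((k : ℕ) + 1 : ℝ) ^ δ * t k ^ 2 ≤ M) :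
    √(δ / 2 ^ δ) * ⨆ k : Fin n, √(Real.log ((k : ℕ) + 2)) * t k ≤ √M := by
  rw [Real.mul_iSup_of_nonneg (Real.sqrt_nonneg _)]
  refine Real.iSup_le (fun k => Real.le_sqrt_of_sq_le ?_) (Real.sqrt_nonneg _)
  have hlog : 0 ≤ Real.log ((k : ℕ) + 2) := Real.log_nonneg (by linarith)
  calc (√(δ / 2 ^ δ) * (√(Real.log ((k : ℕ) + 2)) * t k)) ^ 2
      = δ / 2 ^ δ * Real.log ((k : ℕ) + 2) * t k ^ 2 := by
        rw [mul_pow, mul_pow, Real.sq_sqrt (by positivity), Real.sq_sqrt hlog, mul_assoc]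
    _ ≤ δ / 2 ^ δ * (2 ^ δ / δ * ((k : ℕ) + 1 : ℝ) ^ δ) * t k ^ 2 := by
        gcongr
        exact log_add_two_le hδ k
    _ = ((k : ℕ) + 1 : ℝ) ^ δ * t k ^ 2 := by
        field_simp
    _ ≤ M := h k

end HadamardSquare

open HadamardSquare in
/-- For `1 ≤ q < p ≤ ∞` with `q < 2`:
`‖(A∘A)^T : ℓ_{q*/2}^m → ℓ_{p*/2}^n‖^{1/2} ≳_{p,q} max_j √(ln(j+1)) b_j^↓`,
where `b_j = ‖(a_{ij})_i‖_{2q/(2-q)}` and the rearrangement is encoded via a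
sorting permutation `σ`. -/
theorem stmt16 (q : ℝ) (p pstar qstar : ℝ≥0∞)
    (hq1 : 1 ≤ q) (hq2 : q < 2) (hqp : ENNReal.ofReal q < p)
    (hpconj : 1 / p + 1 / pstar = 1)
    (hqconj : 1 / ENNReal.ofReal q + 1 / qstar = 1) :
    ∃ c : ℝ, 0 < c ∧
      ∀ (m n : ℕ) (A : Fin m → Fin n → ℝ) (σ : Equiv.Perm (Fin n)),
      (∀ j j' : Fin n, j ≤ j' →
        lpNorm (ENNReal.ofReal (2 * q / (2 - q))) (fun i => A i (σ j')) ≤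
          lpNorm (ENNReal.ofReal (2 * q / (2 - q))) (fun i => A i (σ j))) →
      c * (⨆ j : Fin n, Real.sqrt (Real.log ((j : ℕ) + 2)) *
          lpNorm (ENNReal.ofReal (2 * q / (2 - q))) (fun i => A i (σ j))) ≤
        Real.sqrt (opNorm (qstar / 2) (pstar / 2)
          (fun (j : Fin n) (i : Fin m) => A i j ^ 2)) := by
  simp only [one_div] at hpconj hqconj
  set δ := 2 / pstar.toReal - 2 / qstar.toReal
  have hδ : 0 < δ := two_div_toReal_sub_two_div_toReal_pos (by linarith) hqp hpconj hqconj
  obtain ⟨hpstar0, hpstartop⟩ : pstar ≠ 0 ∧ pstar ≠ ⊤ := by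
    refine ENNReal.toReal_ne_zero.1 fun h => ?_
    simp only [δ, h, div_zero, zero_sub, neg_pos] at hδ
    exact hδ.not_ge (by positivity)
  have hu : 1 / (pstar / 2).toReal = 2 / pstar.toReal := by
    rw [ENNReal.toReal_div, ENNReal.toReal_ofNat, one_div_div]
  refine ⟨√(δ / 2 ^ δ), by positivity, fun m n A σ hσ => ?_⟩
  refine mul_iSup_sqrt_log_mul_le_sqrt hδ fun k => ?_
  simpa only [hu] using rpow_mul_sq_lpNorm_le_opNorm hq1 hq2 hqconj
    (ENNReal.div_ne_zero.2 ⟨hpstar0, ENNReal.ofNat_ne_top⟩)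
    (ENNReal.div_ne_top hpstartop two_ne_zero) A σ (fun _ _ h => hσ _ _ h) k
end

section
/- Let r ∈ (0,2], K, L > 0, and let X = (X_{ij})_{i≤m,j≤n} have independent mean-zero entries with P(|X_{ij}| ≥ t) ≤ K e^{−t^r/L} for all t ≥ 0. Then for all 1 ≤ p, q ≤ ∞, (E ‖X_A : ℓ_p^n → ℓ_q^m‖²)^{1/2} ≲_{r,K,L} (m+n)^{1/r} ‖A∘A : ℓ_{p/2}^n → ℓ_{q/2}^m‖^{1/2}, where X_A = (a_{ij}X_{ij}). -/
open MeasureTheory ProbabilityTheory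
open scoped ENNReal

/-!
Row-wise Cauchy–Schwarz gives the deterministic bound
`‖(a_ij c_ij)‖²_{p→q} ≤ (max_i ∑_j c_ij²) · ‖A∘A‖_{p/2→q/2}`, so it suffices to show
`E max_i ∑_j X_ij² ≲ (m+n)^{2/r}`. Truncate every `X_ij²` at `T²`, where `T^r = 4L(1 + log(m+n))`.
The overshoot `X_ij² 1{|X_ij| ≥ T}` has expectation at most `(E X_ij⁴)^{1/2} P(|X_ij| ≥ T)^{1/2}`,
which is `O((m+n)^{-2})`, so all `mn` overshoots together contribute `O(1)`. The truncated row sums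
`S_i` are sums of independent `[0, T²]`-valued variables with bounded means, so
`E exp(S_i / T²) ≤ exp(2n E X²/ T²)`, and the exponential maximal inequality gives
`E max_i S_i ≤ T²(log m + 1) + 2n E X²`. As `r ≤ 2`, both terms are `≲ (m+n)^{2/r}`.
The moments of `X_ij` come from the tail bound through the layer-cake formula and a Gamma integral.
-/

namespace RandomMatrix

section Deterministic

variable {m n : ℕ}

lemma le_iSup_abs (x : Fin n → ℝ) (j : Fin n) : |x j| ≤ ⨆ j', |x j'| :=
  le_ciSup (f := fun j => |x j|) (Set.finite_range _).bddAbove j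

lemma lpNorm_nonneg (p : ℝ≥0∞) (x : Fin n → ℝ) : 0 ≤ lpNorm p x := by
  unfold _root_.lpNorm
  split_ifs
  · exact Real.iSup_nonneg fun j => abs_nonneg _
  · positivity

lemma lpNorm_mono (p : ℝ≥0∞) {x y : Fin n → ℝ} (h : ∀ j, |x j| ≤ y j) :
    lpNorm p x ≤ lpNorm p y := by
  have hy : ∀ j, |x j| ≤ |y j| := fun j => (h j).trans (le_abs_self _)
  unfold _root_.lpNorm
  split_ifs
  · exact Real.iSup_le (fun j => (hy j).trans (le_iSup_abs y j))
      (Real.iSup_nonneg fun j => abs_nonneg _)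
  · exact Real.rpow_le_rpow (by positivity) (Finset.sum_le_sum fun j _ =>
      Real.rpow_le_rpow (abs_nonneg _) (hy j) ENNReal.toReal_nonneg) (by positivity)

lemma abs_le_lpNorm {p : ℝ≥0∞} (hp : p ≠ 0) (x : Fin n → ℝ) (j : Fin n) :
    |x j| ≤ lpNorm p x := by
  unfold _root_.lpNorm
  split_ifs with h
  · exact le_iSup_abs x j
  · have hp' : 0 < p.toReal := ENNReal.toReal_pos hp h
    calc |x j| = (|x j| ^ p.toReal) ^ (1 / p.toReal) := by
          rw [← Real.rpow_mul (abs_nonneg _), mul_one_div_cancel hp'.ne', Real.rpow_one]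
      _ ≤ _ := by
          gcongr
          exact Finset.single_le_sum (f := fun j => |x j| ^ p.toReal)
            (fun j _ => by positivity) (Finset.mem_univ j)

lemma lpNorm_zero {p : ℝ≥0∞} (hp : p ≠ 0) : lpNorm p (0 : Fin n → ℝ) = 0 := by
  unfold _root_.lpNorm
  split_ifs with h
  · simp
  · have hp' : 0 < p.toReal := ENNReal.toReal_pos hp h
    simp [Real.zero_rpow, hp'.ne']

lemma lpNorm_const_mul_le {q : ℝ≥0∞} (hq : q ≠ 0) {c : ℝ} (hc : 0 ≤ c) (w : Fin m → ℝ) :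
    lpNorm q (fun i => c * w i) ≤ c * lpNorm q w := by
  unfold _root_.lpNorm
  split_ifs with h
  · refine Real.iSup_le (fun i => ?_) (mul_nonneg hc (Real.iSup_nonneg fun i => abs_nonneg _))
    rw [abs_mul, abs_of_nonneg hc]
    exact mul_le_mul_of_nonneg_left (le_iSup_abs w i) hc
  · have hq' : 0 < q.toReal := ENNReal.toReal_pos hq h
    simp_rw [abs_mul, abs_of_nonneg hc, Real.mul_rpow hc (abs_nonneg _), ← Finset.mul_sum]
    rw [Real.mul_rpow (by positivity) (by positivity), ← Real.rpow_mul hc,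
      mul_one_div_cancel hq'.ne', Real.rpow_one]

lemma lpNorm_div_two_sq {p : ℝ≥0∞} (hp : p ≠ 0) (x : Fin n → ℝ) :
    lpNorm (p / 2) (fun j => x j ^ 2) = lpNorm p x ^ 2 := by
  unfold _root_.lpNorm
  by_cases h : p = ⊤
  · subst h
    rw [if_pos (ENNReal.top_div_of_ne_top (by norm_num)), if_pos rfl]
    simp_rw [abs_pow]
    rcases isEmpty_or_nonempty (Fin n) with _ | _
    · simp
    obtain ⟨j₀, hj₀⟩ := exists_eq_ciSup_of_finite (f := fun j => |x j|)
    refine le_antisymm (ciSup_le fun j => ?_) ?_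
    · exact pow_le_pow_left₀ (abs_nonneg _) (le_iSup_abs x j) 2
    · rw [← hj₀]
      exact le_ciSup (f := fun j => |x j| ^ 2) (Set.finite_range _).bddAbove j₀
  · have hp2 : p / 2 ≠ ⊤ := by simp [ENNReal.div_eq_top, h]
    have hp' : 0 < p.toReal := ENNReal.toReal_pos hp h
    rw [if_neg hp2, if_neg h, ENNReal.toReal_div, ENNReal.toReal_ofNat]
    have hsq : ∀ j, |x j ^ 2| ^ (p.toReal / 2) = |x j| ^ p.toReal := fun j => by
      rw [abs_pow, ← Real.rpow_natCast, ← Real.rpow_mul (abs_nonneg _)]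
      congr 1
      push_cast
      ring
    simp_rw [hsq]
    rw [← Real.rpow_natCast, ← Real.rpow_mul (by positivity)]
    congr 1
    push_cast
    field_simp

lemma lpNorm_sqrt {q : ℝ≥0∞} (hq : q ≠ 0) {u : Fin m → ℝ} (hu : ∀ i, 0 ≤ u i) :
    lpNorm q (fun i => √(u i)) = √(lpNorm (q / 2) u) := by
  have h := lpNorm_div_two_sq hq (fun i => √(u i))
  simp_rw [Real.sq_sqrt (hu _)] at h
  rw [h, Real.sqrt_sq (lpNorm_nonneg q _)]

lemma bddAbove_opNorm_set {p : ℝ≥0∞} (hp : p ≠ 0) (q : ℝ≥0∞) (B : Fin m → Fin n → ℝ) :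
    BddAbove {c | ∃ x : Fin n → ℝ, lpNorm p x ≤ 1 ∧ c = lpNorm q (fun i => ∑ j, B i j * x j)} := by
  refine ⟨lpNorm q (fun i => ∑ j, |B i j|), ?_⟩
  rintro c ⟨x, hx, rfl⟩
  refine lpNorm_mono q fun i => (Finset.abs_sum_le_sum_abs _ _).trans
    (Finset.sum_le_sum fun j _ => ?_)
  rw [abs_mul]
  exact mul_le_of_le_one_right (abs_nonneg _) ((abs_le_lpNorm hp x j).trans hx)

lemma lpNorm_le_opNorm {p : ℝ≥0∞} (hp : p ≠ 0) (q : ℝ≥0∞) (B : Fin m → Fin n → ℝ)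
    {x : Fin n → ℝ} (hx : lpNorm p x ≤ 1) :
    lpNorm q (fun i => ∑ j, B i j * x j) ≤ opNorm p q B :=
  le_csSup (bddAbove_opNorm_set hp q B) ⟨x, hx, rfl⟩

lemma opNorm_nonneg {p q : ℝ≥0∞} (hp : p ≠ 0) (hq : q ≠ 0) (B : Fin m → Fin n → ℝ) :
    0 ≤ opNorm p q B := by
  have h := lpNorm_le_opNorm hp q B (x := 0) (by rw [lpNorm_zero hp]; exact zero_le_one)
  simp only [Pi.zero_apply, mul_zero, Finset.sum_const_zero] at h
  rwa [← Pi.zero_def, lpNorm_zero hq] at h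

lemma opNorm_le {p q : ℝ≥0∞} {B : Fin m → Fin n → ℝ} {c : ℝ} (hc : 0 ≤ c)
    (h : ∀ x : Fin n → ℝ, lpNorm p x ≤ 1 → lpNorm q (fun i => ∑ j, B i j * x j) ≤ c) :
    opNorm p q B ≤ c :=
  Real.sSup_le (by rintro _ ⟨x, hx, rfl⟩; exact h x hx) hc

lemma opNorm_mul_sq_le {p q : ℝ≥0∞} (hp : p ≠ 0) (hq : q ≠ 0) (A C : Fin m → Fin n → ℝ) :
    opNorm p q (fun i j => A i j * C i j) ^ 2 ≤
      (⨆ i, ∑ j, C i j ^ 2) * opNorm (p / 2) (q / 2) (fun i j => A i j ^ 2) := by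
  set M := ⨆ i, ∑ j, C i j ^ 2
  set a := opNorm (p / 2) (q / 2) (fun i j => A i j ^ 2)
  have hM : 0 ≤ M := Real.iSup_nonneg fun i => by positivity
  have hp2 : p / 2 ≠ 0 := by simp [hp]
  have ha : 0 ≤ a := opNorm_nonneg hp2 (by simp [hq]) _
  suffices opNorm p q (fun i j => A i j * C i j) ≤ √M * √a by
    calc _ ≤ (√M * √a) ^ 2 := pow_le_pow_left₀ (opNorm_nonneg hp hq _) this 2
      _ = M * a := by rw [mul_pow, Real.sq_sqrt hM, Real.sq_sqrt ha]
  refine opNorm_le (by positivity) fun x hx => ?_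
  set u : Fin m → ℝ := fun i => ∑ j, A i j ^ 2 * x j ^ 2
  have hrow : ∀ i, |∑ j, A i j * C i j * x j| ≤ √M * √(u i) := fun i => by
    rw [← Real.sqrt_mul hM, ← Real.sqrt_sq_eq_abs]
    refine Real.sqrt_le_sqrt ?_
    calc (∑ j, A i j * C i j * x j) ^ 2 = (∑ j, C i j * (A i j * x j)) ^ 2 := by
          congr 1; exact Finset.sum_congr rfl fun j _ => by ring
      _ ≤ (∑ j, C i j ^ 2) * ∑ j, (A i j * x j) ^ 2 := Finset.sum_mul_sq_le_sq_mul_sq _ _ _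
      _ ≤ M * u i := by
          simp_rw [u, mul_pow]
          exact mul_le_mul_of_nonneg_right
            (le_ciSup (f := fun i => ∑ j, C i j ^ 2) (Set.finite_range _).bddAbove i)
            (by positivity)
  calc lpNorm q (fun i => ∑ j, A i j * C i j * x j)
      ≤ lpNorm q (fun i => √M * √(u i)) := lpNorm_mono q hrow
    _ ≤ √M * lpNorm q (fun i => √(u i)) := lpNorm_const_mul_le hq (Real.sqrt_nonneg _) _
    _ = √M * √(lpNorm (q / 2) u) := by rw [lpNorm_sqrt hq fun i => by positivity]
    _ ≤ √M * √a := by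
        gcongr
        refine lpNorm_le_opNorm hp2 _ _ (x := fun j => x j ^ 2) ?_
        rw [lpNorm_div_two_sq hp]
        exact pow_le_one₀ (lpNorm_nonneg _ _) hx

lemma lintegral_opNorm_mul_sq_le {Ω : Type*} [MeasurableSpace Ω] (μ : Measure Ω)
    {p q : ℝ≥0∞} (hp : p ≠ 0) (hq : q ≠ 0) (A : Fin m → Fin n → ℝ) (X : Fin m → Fin n → Ω → ℝ) :
    ∫⁻ ω, ENNReal.ofReal (opNorm p q (fun i j => A i j * X i j ω) ^ 2) ∂μ ≤
      ENNReal.ofReal (opNorm (p / 2) (q / 2) (fun i j => A i j ^ 2)) *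
        ∫⁻ ω, ENNReal.ofReal (⨆ i, ∑ j, X i j ω ^ 2) ∂μ := by
  have ha := opNorm_nonneg (p := p / 2) (q := q / 2) (by simp [hp]) (by simp [hq])
    (fun i j => A i j ^ 2)
  rw [← lintegral_const_mul' _ _ ENNReal.ofReal_ne_top]
  refine lintegral_mono fun ω => ?_
  rw [← ENNReal.ofReal_mul ha, mul_comm (opNorm _ _ _)]
  exact ENNReal.ofReal_le_ofReal (opNorm_mul_sq_le hp hq A fun i j => X i j ω)

end Deterministic

noncomputable def psiMoment (r K L p : ℝ) : ℝ := K * L ^ (p / r) * Real.Gamma (p / r + 1)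

lemma psiMoment_nonneg {r K L p : ℝ} (hr : 0 < r) (hK : 0 ≤ K) (hL : 0 < L) (hp : 0 ≤ p) :
    0 ≤ psiMoment r K L p := by
  have := Real.Gamma_pos_of_pos (show 0 < p / r + 1 by positivity)
  unfold psiMoment
  positivity

section Tails

variable {Ω : Type*} [MeasurableSpace Ω] {μ : Measure Ω}

lemma lintegral_abs_rpow_le_of_tail {r K L : ℝ} (hr : 0 < r) (hK : 0 ≤ K) (hL : 0 < L)
    {Y : Ω → ℝ} (hY : AEMeasurable Y μ)
    (htail : ∀ t : ℝ, 0 ≤ t → μ {ω | t ≤ |Y ω|} ≤ ENNReal.ofReal (K * Real.exp (-t ^ r / L)))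
    {p : ℝ} (hp : 0 < p) :
    ∫⁻ ω, ENNReal.ofReal (|Y ω| ^ p) ∂μ ≤ ENNReal.ofReal (psiMoment r K L p) := by
  set g : ℝ → ℝ := fun t => t ^ (p - 1) * Real.exp (-L⁻¹ * t ^ r)
  have hg : IntegrableOn g (Set.Ioi 0) :=
    integrableOn_rpow_mul_exp_neg_mul_rpow (by linarith) hr (inv_pos.2 hL)
  have hg_integral : ∫ t in Set.Ioi 0, g t = L ^ (p / r) * (1 / r) * Real.Gamma (p / r) := by
    rw [integral_rpow_mul_exp_neg_mul_rpow hr (by linarith) (inv_pos.2 hL), sub_add_cancel,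
      Real.inv_rpow hL.le, ← Real.rpow_neg hL.le, neg_div, neg_neg]
  rw [lintegral_rpow_eq_lintegral_meas_le_mul μ (ae_of_all _ fun _ => abs_nonneg _) hY.abs hp]
  calc ENNReal.ofReal p * ∫⁻ t in Set.Ioi 0, μ {ω | t ≤ |Y ω|} * ENNReal.ofReal (t ^ (p - 1))
      ≤ ENNReal.ofReal p * ∫⁻ t in Set.Ioi 0, ENNReal.ofReal (K * g t) := by
        gcongr _ * ?_
        refine setLIntegral_mono' measurableSet_Ioi fun t ht => ?_
        rw [mul_left_comm, ENNReal.ofReal_mul' (by positivity), mul_comm, neg_mul, ← div_eq_inv_mul,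
          ← neg_div]
        gcongr
        exact htail t (le_of_lt ht)
    _ = ENNReal.ofReal (p * (K * ∫ t in Set.Ioi 0, g t)) := by
        rw [← integral_const_mul, ENNReal.ofReal_mul hp.le,
          ofReal_integral_eq_lintegral_ofReal (hg.const_mul K)
            ((ae_restrict_iff' measurableSet_Ioi).2 (ae_of_all _ fun t ht => by
              have : (0 : ℝ) ≤ t := le_of_lt ht
              positivity))]
    _ = ENNReal.ofReal (psiMoment r K L p) := by
        rw [psiMoment, hg_integral, Real.Gamma_add_one (by positivity)]
        congr 1
        field_simp

lemma lintegral_indicator_le_sqrt_mul_sqrt {f : Ω → ℝ≥0∞} (hf : AEMeasurable f μ) {s : Set Ω}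
    (hs : MeasurableSet s) :
    ∫⁻ ω, s.indicator f ω ∂μ ≤ (∫⁻ ω, f ω ^ (2 : ℝ) ∂μ) ^ (1 / 2 : ℝ) * μ s ^ (1 / 2 : ℝ) := by
  have hmul : s.indicator f = f * s.indicator 1 := by
    ext ω; by_cases hω : ω ∈ s <;> simp [hω]
  have hsq : ∀ ω, s.indicator (1 : Ω → ℝ≥0∞) ω ^ (2 : ℝ) = s.indicator 1 ω := fun ω => by
    by_cases hω : ω ∈ s <;> simp [hω]
  rw [hmul]
  refine (ENNReal.lintegral_mul_le_Lp_mul_Lq μ Real.HolderConjugate.two_two hf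
    (measurable_one.indicator hs).aemeasurable).trans_eq ?_
  simp_rw [hsq]
  rw [lintegral_indicator_one hs]

lemma lintegral_indicator_sq_le_of_tail {r K L : ℝ} (hr : 0 < r) (hK : 0 ≤ K) (hL : 0 < L)
    {Y : Ω → ℝ} (hY : Measurable Y)
    (htail : ∀ t : ℝ, 0 ≤ t → μ {ω | t ≤ |Y ω|} ≤ ENNReal.ofReal (K * Real.exp (-t ^ r / L)))
    {T : ℝ} (hT : 0 ≤ T) :
    ∫⁻ ω, ENNReal.ofReal ({y : ℝ | T ≤ |y|}.indicator (fun y => y ^ 2) (Y ω)) ∂μ ≤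
      ENNReal.ofReal (√(psiMoment r K L 4) * √(K * Real.exp (-T ^ r / L))) := by
  have hind : ∀ ω, ENNReal.ofReal ({y : ℝ | T ≤ |y|}.indicator (fun y => y ^ 2) (Y ω)) =
      {ω | T ≤ |Y ω|}.indicator (fun ω => ENNReal.ofReal (Y ω ^ 2)) ω := fun ω => by
    by_cases h : T ≤ |Y ω| <;> simp [h]
  have hfourth : ∀ ω, ENNReal.ofReal (Y ω ^ 2) ^ (2 : ℝ) = ENNReal.ofReal (|Y ω| ^ (4 : ℝ)) :=
    fun ω => by
      rw [ENNReal.ofReal_rpow_of_nonneg (sq_nonneg _) zero_le_two, ← sq_abs,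
        ← Real.rpow_natCast, ← Real.rpow_mul (abs_nonneg _)]
      norm_num
  simp_rw [hind]
  refine (lintegral_indicator_le_sqrt_mul_sqrt (by fun_prop)
    (measurableSet_le measurable_const hY.abs)).trans ?_
  simp_rw [hfourth]
  rw [ENNReal.ofReal_mul (Real.sqrt_nonneg _), Real.sqrt_eq_rpow, Real.sqrt_eq_rpow,
    ← ENNReal.ofReal_rpow_of_nonneg (psiMoment_nonneg hr hK hL (by norm_num)) (by norm_num),
    ← ENNReal.ofReal_rpow_of_nonneg (by positivity) (by norm_num)]
  gcongr
  · exact lintegral_abs_rpow_le_of_tail hr hK hL hY.aemeasurable htail (by norm_num)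
  · exact htail T hT

end Tails

section Concentration

variable {Ω : Type*} [MeasurableSpace Ω] {μ : Measure Ω} [IsProbabilityMeasure μ]

lemma mgf_inv_le_of_nonneg_of_le {W : Ω → ℝ} (hW : Measurable W) {B : ℝ} (hB : 0 < B)
    (h0 : ∀ ω, 0 ≤ W ω) (hWB : ∀ ω, W ω ≤ B) :
    mgf W μ B⁻¹ ≤ Real.exp (2 * B⁻¹ * ∫ ω, W ω ∂μ) := by
  have hscaled : ∀ ω, 0 ≤ B⁻¹ * W ω ∧ B⁻¹ * W ω ≤ 1 := fun ω =>
    ⟨by have := h0 ω; positivity, by rw [inv_mul_le_one₀ hB]; exact hWB ω⟩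
  have hexp : ∀ ω, Real.exp (B⁻¹ * W ω) ≤ 1 + 2 * B⁻¹ * W ω := fun ω => by
    have h := (abs_le.1 (Real.abs_exp_sub_one_le (x := B⁻¹ * W ω)
      (by rw [abs_of_nonneg (hscaled ω).1]; exact (hscaled ω).2))).2
    rw [abs_of_nonneg (hscaled ω).1] at h
    linarith
  have hWint : Integrable W μ :=
    .of_mem_Icc 0 B hW.aemeasurable (ae_of_all _ fun ω => ⟨h0 ω, hWB ω⟩)
  calc mgf W μ B⁻¹ ≤ ∫ ω, (1 + 2 * B⁻¹ * W ω) ∂μ :=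
        integral_mono (.of_mem_Icc 0 3 (by fun_prop) (ae_of_all _ fun ω =>
          ⟨(Real.exp_pos _).le, (hexp ω).trans (by linarith [(hscaled ω).2])⟩))
          ((integrable_const 1).add (hWint.const_mul _)) hexp
    _ = 1 + 2 * B⁻¹ * ∫ ω, W ω ∂μ := by
        rw [integral_add (integrable_const 1) (hWint.const_mul _), integral_const_mul]
        simp
    _ ≤ Real.exp (2 * B⁻¹ * ∫ ω, W ω ∂μ) := by
        linarith [Real.add_one_le_exp (2 * B⁻¹ * ∫ ω, W ω ∂μ)]

lemma mgf_sum_inv_le {ι : Type*} [Fintype ι] {W : ι → Ω → ℝ} (hind : iIndepFun W μ)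
    (hmeas : ∀ j, Measurable (W j)) {B c : ℝ} (hB : 0 < B) (h0 : ∀ j ω, 0 ≤ W j ω)
    (hWB : ∀ j ω, W j ω ≤ B) (hc : ∀ j, ∫ ω, W j ω ∂μ ≤ c) :
    mgf (∑ j, W j) μ B⁻¹ ≤ Real.exp (2 * B⁻¹ * (Fintype.card ι * c)) := by
  rw [hind.mgf_sum hmeas]
  calc ∏ j, mgf (W j) μ B⁻¹ ≤ ∏ _j : ι, Real.exp (2 * B⁻¹ * c) := by
        refine Finset.prod_le_prod (fun j _ => mgf_nonneg) fun j _ =>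
          (mgf_inv_le_of_nonneg_of_le (hmeas j) hB (h0 j) (hWB j)).trans ?_
        gcongr
        exact hc j
    _ = Real.exp (2 * B⁻¹ * (Fintype.card ι * c)) := by
        rw [Finset.prod_const, ← Real.exp_nat_mul, Finset.card_univ]
        ring_nf

lemma iSup_le_mul_add_mul_sum_exp {ι : Type*} [Fintype ι] [Nonempty ι] (y : ι → ℝ) {B : ℝ}
    (hB : 0 < B) (a : ℝ) :
    ⨆ i, y i ≤ B * a + B * ∑ i, Real.exp (-a) * Real.exp (B⁻¹ * y i) := by
  refine ciSup_le fun i => ?_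
  have hexp := Real.add_one_le_exp (B⁻¹ * y i - a)
  rw [sub_eq_neg_add, Real.exp_add] at hexp
  have hterm := Finset.single_le_sum (f := fun i => Real.exp (-a) * Real.exp (B⁻¹ * y i))
    (fun i _ => by positivity) (Finset.mem_univ i)
  have hy : y i = B * a + B * (B⁻¹ * y i - a) := by field_simp; ring
  rw [hy]
  nlinarith

lemma lintegral_iSup_le_of_mgf_le {ι : Type*} [Fintype ι] [Nonempty ι] {Y : ι → Ω → ℝ}
    {B β : ℝ} (hB : 0 < B) (hβ : 0 ≤ β)
    (hint : ∀ i, Integrable (fun ω => Real.exp (B⁻¹ * Y i ω)) μ)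
    (hmgf : ∀ i, mgf (Y i) μ B⁻¹ ≤ Real.exp β) :
    ∫⁻ ω, ENNReal.ofReal (⨆ i, Y i ω) ∂μ ≤
      ENNReal.ofReal (B * (Real.log (Fintype.card ι) + β + 1)) := by
  -- this choice of `a` makes the exponential part of `F` integrate to at most `B`
  set a := Real.log (Fintype.card ι) + β
  have ha : 0 ≤ a := add_nonneg (Real.log_natCast_nonneg _) hβ
  set F : Ω → ℝ := fun ω => B * a + B * ∑ i, Real.exp (-a) * Real.exp (B⁻¹ * Y i ω)
  have hF : ∀ ω, ⨆ i, Y i ω ≤ F ω := fun ω => iSup_le_mul_add_mul_sum_exp (Y · ω) hB a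
  have hF0 : ∀ ω, 0 ≤ F ω := fun ω => by positivity
  have hFint : Integrable F μ := (integrable_const _).add
    ((integrable_finsetSum _ fun i _ => (hint i).const_mul _).const_mul _)
  calc ∫⁻ ω, ENNReal.ofReal (⨆ i, Y i ω) ∂μ ≤ ∫⁻ ω, ENNReal.ofReal (F ω) ∂μ :=
        lintegral_mono fun ω => ENNReal.ofReal_le_ofReal (hF ω)
    _ = ENNReal.ofReal (∫ ω, F ω ∂μ) :=
        (ofReal_integral_eq_lintegral_ofReal hFint (ae_of_all _ hF0)).symm
    _ ≤ ENNReal.ofReal (B * a + B * ∑ _i : ι, Real.exp (-a) * Real.exp β) := by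
        refine ENNReal.ofReal_le_ofReal ?_
        rw [integral_add (integrable_const _) ((integrable_finsetSum _ fun i _ =>
          (hint i).const_mul _).const_mul _), integral_const, probReal_univ, one_smul,
          integral_const_mul, integral_finsetSum _ fun i _ => (hint i).const_mul _]
        simp only [integral_const_mul]
        gcongr with i
        exact hmgf i
    _ = ENNReal.ofReal (B * (Real.log (Fintype.card ι) + β + 1)) := by
        congr 1
        have hcard : (0 : ℝ) < Fintype.card ι := by exact_mod_cast Fintype.card_pos
        rw [Finset.sum_const, Finset.card_univ, nsmul_eq_mul, ← Real.exp_add, neg_add_eq_sub,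
          show β - a = -Real.log (Fintype.card ι) by ring, Real.exp_neg, Real.exp_log hcard]
        field_simp
        ring

lemma lintegral_iSup_sum_le {ι κ : Type*} [Fintype ι] [Nonempty ι] [Fintype κ]
    {W : ι → κ → Ω → ℝ} (hmeas : ∀ i j, Measurable (W i j)) (hind : ∀ i, iIndepFun (W i) μ)
    {B c : ℝ} (hB : 0 < B) (hc : 0 ≤ c) (h0 : ∀ i j ω, 0 ≤ W i j ω)
    (hWB : ∀ i j ω, W i j ω ≤ B) (hmean : ∀ i j, ∫ ω, W i j ω ∂μ ≤ c) :
    ∫⁻ ω, ENNReal.ofReal (⨆ i, ∑ j, W i j ω) ∂μ ≤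
      ENNReal.ofReal (B * (Real.log (Fintype.card ι) + 1) + 2 * Fintype.card κ * c) := by
  have hsum_le : ∀ i ω, ∑ j, W i j ω ≤ Fintype.card κ * B := fun i ω => by
    simpa using Finset.sum_le_card_nsmul Finset.univ (fun j => W i j ω) B fun j _ => hWB i j ω
  have hint : ∀ i, Integrable (fun ω => Real.exp (B⁻¹ * ∑ j, W i j ω)) μ := fun i =>
    .of_mem_Icc 0 (Real.exp (B⁻¹ * (Fintype.card κ * B))) (by fun_prop) (ae_of_all _ fun ω =>
      ⟨(Real.exp_pos _).le,
        Real.exp_le_exp.2 (mul_le_mul_of_nonneg_left (hsum_le i ω) (inv_nonneg.2 hB.le))⟩)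
  have hmgf : ∀ i, mgf (fun ω => ∑ j, W i j ω) μ B⁻¹ ≤
      Real.exp (2 * B⁻¹ * (Fintype.card κ * c)) := fun i => by
    simpa only [Finset.sum_fn] using
      mgf_sum_inv_le (hind i) (hmeas i) hB (h0 i) (hWB i) (hmean i)
  refine (lintegral_iSup_le_of_mgf_le hB (by positivity) hint hmgf).trans_eq ?_
  congr 1
  field_simp
  ring

end Concentration

lemma one_add_log_rpow_le {a x : ℝ} (ha : 0 < a) (hx : 1 ≤ x) :
    (1 + Real.log x) ^ a ≤ (1 + a) ^ a * x := by
  have h1 : 1 ≤ x ^ a⁻¹ := Real.one_le_rpow hx (by positivity)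
  have hlog : Real.log x ≤ a * x ^ a⁻¹ := by
    have := Real.log_le_rpow_div (x := x) (by linarith) (inv_pos.2 ha)
    rwa [div_inv_eq_mul, mul_comm] at this
  calc (1 + Real.log x) ^ a ≤ ((1 + a) * x ^ a⁻¹) ^ a :=
        Real.rpow_le_rpow (by linarith [Real.log_nonneg hx]) (by nlinarith) ha.le
    _ = (1 + a) ^ a * x := by
        rw [Real.mul_rpow (by positivity) (by positivity), ← Real.rpow_mul (by linarith),
          inv_mul_cancel₀ ha.ne', Real.rpow_one]

noncomputable def truncationLevel (r L N : ℝ) : ℝ := (4 * L * (1 + Real.log N)) ^ (1 / r)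

section Truncation

variable {r L N : ℝ}

lemma truncationLevel_pos (hL : 0 < L) (hN : 1 ≤ N) : 0 < truncationLevel r L N := by
  have := Real.log_nonneg hN
  unfold truncationLevel
  positivity

lemma truncationLevel_rpow (hr : 0 < r) (hL : 0 < L) (hN : 1 ≤ N) :
    truncationLevel r L N ^ r = 4 * L * (1 + Real.log N) := by
  have := Real.log_nonneg hN
  rw [truncationLevel, ← Real.rpow_mul (by positivity), one_div_mul_cancel hr.ne', Real.rpow_one]

lemma sq_truncationLevel_mul_le (hr : 0 < r) (hL : 0 < L) (hN : 1 ≤ N) :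
    truncationLevel r L N ^ 2 * (1 + Real.log N) ≤
      (4 * L) ^ (2 / r) * (2 + 2 / r) ^ (1 + 2 / r) * N := by
  have hℓ : 1 ≤ 1 + Real.log N := by linarith [Real.log_nonneg hN]
  rw [truncationLevel, ← Real.rpow_natCast, ← Real.rpow_mul (by positivity),
    Real.mul_rpow (by positivity) (by positivity), mul_assoc,
    ← Real.rpow_add_one (by positivity), mul_assoc]
  push_cast
  rw [show 1 / r * 2 = 2 / r by ring, show 2 + 2 / r = 1 + (2 / r + 1) by ring, add_comm 1 (2 / r)]
  gcongr
  exact one_add_log_rpow_le (by positivity) hN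

lemma mul_mul_sqrt_exp_truncationLevel_le {K x y : ℝ} (hr : 0 < r) (hL : 0 < L) (hx : 0 ≤ x)
    (hy : 0 ≤ y) (hxy : 1 ≤ x + y) :
    x * y * √(K * Real.exp (-truncationLevel r L (x + y) ^ r / L)) ≤ √K := by
  have hsqrt : √(K * Real.exp (-truncationLevel r L (x + y) ^ r / L)) =
      √K * (Real.exp (-2) * ((x + y) ^ 2)⁻¹) := by
    rw [truncationLevel_rpow hr hL hxy, Real.sqrt_mul' _ (Real.exp_pos _).le,
      ← Real.exp_log (by positivity : 0 < (x + y) ^ 2), ← Real.exp_neg, ← Real.exp_add,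
      Real.log_pow, ← Real.exp_half]
    congr 2
    field_simp
    ring
  have hxy2 : x * y ≤ (x + y) ^ 2 := by nlinarith
  rw [hsqrt]
  calc x * y * (√K * (Real.exp (-2) * ((x + y) ^ 2)⁻¹))
      = √K * Real.exp (-2) * (x * y / (x + y) ^ 2) := by ring
    _ ≤ √K * 1 * 1 := by
        gcongr
        · exact Real.exp_le_one_iff.2 (by norm_num)
        · exact div_le_one_of_le₀ hxy2 (by positivity)
    _ = √K := by ring

end Truncation

-- The three terms dominate `T² (log m + 1)`, `2 n E X²` and the total overshoot above the
-- truncation level `T`, each divided by `(m + n)^{2/r}`.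
noncomputable def rowSumConst (r K L : ℝ) : ℝ :=
  (4 * L) ^ (2 / r) * (2 + 2 / r) ^ (1 + 2 / r) + 2 * psiMoment r K L 2 +
    √(psiMoment r K L 4) * √K

lemma rowSumConst_pos {r K L : ℝ} (hr : 0 < r) (hK : 0 ≤ K) (hL : 0 < L) :
    0 < rowSumConst r K L := by
  have := psiMoment_nonneg hr hK hL zero_le_two
  unfold rowSumConst
  positivity

lemma truncation_bound_le {r K L : ℝ} (hr : 0 < r) (hr2 : r ≤ 2) (hK : 0 ≤ K) (hL : 0 < L)
    {m n : ℕ} (hm : 0 < m) :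
    truncationLevel r L (m + n) ^ 2 * (Real.log m + 1) + 2 * n * psiMoment r K L 2 +
        m * n * (√(psiMoment r K L 4) *
          √(K * Real.exp (-truncationLevel r L (m + n) ^ r / L))) ≤
      rowSumConst r K L * ((m + n : ℕ) : ℝ) ^ (2 / r) := by
  push_cast
  set N : ℝ := m + n
  have hm1 : (1 : ℝ) ≤ m := by exact_mod_cast hm
  have hmN : (m : ℝ) ≤ N := le_add_of_nonneg_right n.cast_nonneg
  have hnN : (n : ℝ) ≤ N := le_add_of_nonneg_left m.cast_nonneg
  have hN : 1 ≤ N := hm1.trans hmN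
  have hNpow : N ≤ N ^ (2 / r) := by
    simpa using Real.rpow_le_rpow_of_exponent_le hN ((one_le_div hr).2 hr2)
  have hhead : truncationLevel r L N ^ 2 * (Real.log m + 1) ≤
      (4 * L) ^ (2 / r) * (2 + 2 / r) ^ (1 + 2 / r) * N ^ (2 / r) := by
    have hlog : Real.log m ≤ Real.log N := Real.log_le_log (by positivity) (by linarith)
    calc truncationLevel r L N ^ 2 * (Real.log m + 1)
        ≤ truncationLevel r L N ^ 2 * (1 + Real.log N) :=
          mul_le_mul_of_nonneg_left (by linarith) (sq_nonneg _)
      _ ≤ _ := (sq_truncationLevel_mul_le hr hL hN).trans (by gcongr)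
  have hmean : 2 * n * psiMoment r K L 2 ≤ 2 * psiMoment r K L 2 * N ^ (2 / r) := by
    have := psiMoment_nonneg hr hK hL zero_le_two
    have : (n : ℝ) ≤ N ^ (2 / r) := by linarith
    nlinarith
  have htails : m * n * (√(psiMoment r K L 4) *
      √(K * Real.exp (-truncationLevel r L N ^ r / L))) ≤ √(psiMoment r K L 4) * √K * N ^ (2 / r) :=
    calc _ = √(psiMoment r K L 4) * (m * n * √(K * Real.exp (-truncationLevel r L N ^ r / L))) := by
          ring
      _ ≤ √(psiMoment r K L 4) * √K * 1 := by
          rw [mul_one]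
          gcongr
          exact mul_mul_sqrt_exp_truncationLevel_le hr hL (by positivity) (by positivity) hN
      _ ≤ _ := by gcongr; linarith
  rw [rowSumConst]
  linarith

section RowSums

variable {Ω : Type*} [MeasurableSpace Ω] {μ : Measure Ω} [IsProbabilityMeasure μ]
  {m n : ℕ} {X : Fin m → Fin n → Ω → ℝ} {r K L : ℝ}

lemma integral_min_sq_le_psiMoment (hr : 0 < r) (hK : 0 ≤ K) (hL : 0 < L) {Y : Ω → ℝ}
    (hY : Measurable Y)
    (htail : ∀ t : ℝ, 0 ≤ t → μ {ω | t ≤ |Y ω|} ≤ ENNReal.ofReal (K * Real.exp (-t ^ r / L)))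
    {B : ℝ} (hB : 0 ≤ B) : ∫ ω, min (Y ω ^ 2) B ∂μ ≤ psiMoment r K L 2 := by
  refine (ENNReal.ofReal_le_ofReal_iff (psiMoment_nonneg hr hK hL zero_le_two)).1 ?_
  rw [ofReal_integral_eq_lintegral_ofReal (.of_mem_Icc 0 B (by fun_prop) (ae_of_all _ fun ω =>
    ⟨le_min (sq_nonneg _) hB, min_le_right _ _⟩)) (ae_of_all _ fun ω => le_min (sq_nonneg _) hB)]
  calc ∫⁻ ω, ENNReal.ofReal (min (Y ω ^ 2) B) ∂μ ≤ ∫⁻ ω, ENNReal.ofReal (|Y ω| ^ (2 : ℝ)) ∂μ :=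
        lintegral_mono fun ω => ENNReal.ofReal_le_ofReal
          ((min_le_left _ _).trans_eq (by rw [Real.rpow_two, sq_abs]))
    _ ≤ _ := lintegral_abs_rpow_le_of_tail hr hK hL hY.aemeasurable htail two_pos

lemma iSup_sum_sq_le_truncated_add {m n : ℕ} (x : Fin m → Fin n → ℝ) (T : ℝ) :
    ⨆ i, ∑ j, x i j ^ 2 ≤ (⨆ i, ∑ j, min (x i j ^ 2) (T ^ 2)) +
      ∑ i, ∑ j, {y : ℝ | T ≤ |y|}.indicator (fun y => y ^ 2) (x i j) := by
  have hsplit : ∀ y : ℝ, y ^ 2 ≤ min (y ^ 2) (T ^ 2) + {y : ℝ | T ≤ |y|}.indicator (· ^ 2) y :=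
    fun y => by
      by_cases h : T ≤ |y|
      · simpa [h] using le_min (sq_nonneg y) (sq_nonneg T)
      · rw [Set.indicator_of_notMem (show y ∉ {y : ℝ | T ≤ |y|} from h), add_zero]
        exact le_min le_rfl (sq_le_sq.2 ((not_le.1 h).le.trans (le_abs_self T)))
  have hover : ∀ y : ℝ, 0 ≤ {y : ℝ | T ≤ |y|}.indicator (· ^ 2) y := fun y =>
    Set.indicator_nonneg (fun y _ => sq_nonneg y) y
  refine Real.iSup_le (fun i => ?_) (add_nonneg (Real.iSup_nonneg fun i =>
    Finset.sum_nonneg fun j _ => le_min (sq_nonneg _) (sq_nonneg _))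
    (Finset.sum_nonneg fun i _ => Finset.sum_nonneg fun j _ => hover _))
  calc ∑ j, x i j ^ 2 ≤ ∑ j, min (x i j ^ 2) (T ^ 2) +
        ∑ j, {y : ℝ | T ≤ |y|}.indicator (· ^ 2) (x i j) := by
        rw [← Finset.sum_add_distrib]
        exact Finset.sum_le_sum fun j _ => hsplit (x i j)
    _ ≤ _ := add_le_add
        (le_ciSup (f := fun i => ∑ j, min (x i j ^ 2) (T ^ 2)) (Set.finite_range _).bddAbove i)
        (Finset.single_le_sum (f := fun i => ∑ j, {y : ℝ | T ≤ |y|}.indicator (· ^ 2) (x i j))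
          (fun i _ => Finset.sum_nonneg fun j _ => hover _) (Finset.mem_univ i))

lemma lintegral_iSup_rowSum_sq_le_of_truncation [NeZero m] (hr : 0 < r) (hK : 0 ≤ K)
    (hL : 0 < L) (hX : ∀ i j, Measurable (X i j))
    (hind : iIndepFun (fun ij : Fin m × Fin n => X ij.1 ij.2) μ)
    (htail : ∀ i j, ∀ t : ℝ, 0 ≤ t →
      μ {ω | t ≤ |X i j ω|} ≤ ENNReal.ofReal (K * Real.exp (-t ^ r / L)))
    {T : ℝ} (hT : 0 < T) :
    ∫⁻ ω, ENNReal.ofReal (⨆ i, ∑ j, X i j ω ^ 2) ∂μ ≤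
      ENNReal.ofReal (T ^ 2 * (Real.log m + 1) + 2 * n * psiMoment r K L 2 +
        m * n * (√(psiMoment r K L 4) * √(K * Real.exp (-T ^ r / L)))) := by
  set V : Fin m → Fin n → Ω → ℝ := fun i j ω =>
    {y : ℝ | T ≤ |y|}.indicator (fun y => y ^ 2) (X i j ω)
  have hV0 : ∀ i j ω, 0 ≤ V i j ω := fun i j ω =>
    Set.indicator_nonneg (fun y _ => sq_nonneg y) _
  have hV : ∀ i j, Measurable fun ω => ENNReal.ofReal (V i j ω) := fun i j =>
    (((measurable_id.pow_const 2).indicator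
      (measurableSet_le measurable_const measurable_abs)).comp (hX i j)).ennreal_ofReal
  have hhead : ∫⁻ ω, ENNReal.ofReal (⨆ i, ∑ j, min (X i j ω ^ 2) (T ^ 2)) ∂μ ≤
      ENNReal.ofReal (T ^ 2 * (Real.log m + 1) + 2 * n * psiMoment r K L 2) := by
    simpa using lintegral_iSup_sum_le (μ := μ) (fun i j => by fun_prop)
      (fun i => (hind.comp (fun _ v => min (v ^ 2) (T ^ 2)) fun _ => by fun_prop).precomp
        (Prod.mk_right_injective i)) (pow_pos hT 2) (psiMoment_nonneg hr hK hL zero_le_two)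
      (fun i j ω => le_min (sq_nonneg _) (sq_nonneg _)) (fun i j ω => min_le_right _ _)
      (fun i j => integral_min_sq_le_psiMoment hr hK hL (hX i j) (htail i j) (sq_nonneg T))
  have htails : ∑ i, ∑ j, ∫⁻ ω, ENNReal.ofReal (V i j ω) ∂μ ≤
      ENNReal.ofReal (m * n * (√(psiMoment r K L 4) * √(K * Real.exp (-T ^ r / L)))) := by
    refine (Finset.sum_le_sum fun i _ => Finset.sum_le_sum fun j _ =>
      lintegral_indicator_sq_le_of_tail hr hK hL (hX i j) (htail i j) hT.le).trans_eq ?_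
    simp only [Finset.sum_const, Finset.card_univ, Fintype.card_fin, nsmul_eq_mul]
    rw [ENNReal.ofReal_mul (by positivity), ENNReal.ofReal_mul (by positivity)]
    simp [mul_assoc]
  calc ∫⁻ ω, ENNReal.ofReal (⨆ i, ∑ j, X i j ω ^ 2) ∂μ
      ≤ ∫⁻ ω, ENNReal.ofReal (⨆ i, ∑ j, min (X i j ω ^ 2) (T ^ 2)) +
          ∑ i, ∑ j, ENNReal.ofReal (V i j ω) ∂μ := lintegral_mono fun ω => by
        refine (ENNReal.ofReal_le_ofReal (iSup_sum_sq_le_truncated_add (X · · ω) T)).trans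
          (ENNReal.ofReal_add_le.trans_eq ?_)
        rw [ENNReal.ofReal_sum_of_nonneg fun i _ => Finset.sum_nonneg fun j _ => hV0 i j ω]
        exact congrArg _ (Finset.sum_congr rfl fun i _ =>
          ENNReal.ofReal_sum_of_nonneg fun j _ => hV0 i j ω)
    _ = ∫⁻ ω, ENNReal.ofReal (⨆ i, ∑ j, min (X i j ω ^ 2) (T ^ 2)) ∂μ +
          ∑ i, ∑ j, ∫⁻ ω, ENNReal.ofReal (V i j ω) ∂μ := by
        rw [lintegral_add_right _ (by fun_prop), lintegral_finsetSum _ fun i _ => by fun_prop]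
        exact congrArg _ (Finset.sum_congr rfl fun i _ =>
          lintegral_finsetSum _ fun j _ => hV i j)
    _ ≤ _ := (add_le_add hhead htails).trans_eq (ENNReal.ofReal_add
        (add_nonneg (mul_nonneg (sq_nonneg T) (by linarith [Real.log_natCast_nonneg m]))
          (mul_nonneg (by positivity) (psiMoment_nonneg hr hK hL zero_le_two)))
        (by positivity)).symm

lemma lintegral_iSup_rowSum_sq_le (hr : 0 < r) (hr2 : r ≤ 2) (hK : 0 ≤ K) (hL : 0 < L)
    (hX : ∀ i j, Measurable (X i j))
    (hind : iIndepFun (fun ij : Fin m × Fin n => X ij.1 ij.2) μ)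
    (htail : ∀ i j, ∀ t : ℝ, 0 ≤ t →
      μ {ω | t ≤ |X i j ω|} ≤ ENNReal.ofReal (K * Real.exp (-t ^ r / L))) :
    ∫⁻ ω, ENNReal.ofReal (⨆ i, ∑ j, X i j ω ^ 2) ∂μ ≤
      ENNReal.ofReal (rowSumConst r K L * ((m + n : ℕ) : ℝ) ^ (2 / r)) := by
  rcases Nat.eq_zero_or_pos m with rfl | hm
  · simp
  have : NeZero m := ⟨hm.ne'⟩
  have hT : 0 < truncationLevel r L (m + n) :=
    truncationLevel_pos hL (by linarith [(Nat.one_le_cast (α := ℝ)).2 hm, n.cast_nonneg (α := ℝ)])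
  exact (lintegral_iSup_rowSum_sq_le_of_truncation hr hK hL hX hind htail hT).trans
    (ENNReal.ofReal_le_ofReal (truncation_bound_le hr hr2 hK hL hm))

end RowSums

end RandomMatrix

open RandomMatrix in
/-- Crude bound for ψ_r matrices: `(E ‖X_A : ℓ_p^n → ℓ_q^m‖²)^{1/2}
≲_{r,K,L} (m+n)^{1/r} ‖A∘A : ℓ_{p/2}^n → ℓ_{q/2}^m‖^{1/2}`. -/
theorem stmt17 (r K L : ℝ) (hr0 : 0 < r) (hr2 : r ≤ 2) (hK : 0 < K) (hL : 0 < L) :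
    ∃ C : ℝ, 0 < C ∧
    ∀ (Ω : Type) (_ : MeasurableSpace Ω) (μ : Measure Ω), IsProbabilityMeasure μ →
    ∀ (m n : ℕ) (X : Fin m → Fin n → Ω → ℝ),
    (∀ i j, Measurable (X i j)) →
    iIndepFun (fun ij : Fin m × Fin n => X ij.1 ij.2) μ →
    (∀ i j, Integrable (X i j) μ) →
    (∀ i j, ∫ ω, X i j ω ∂μ = 0) →
    (∀ i j, ∀ t : ℝ, 0 ≤ t →
      μ {ω | t ≤ |X i j ω|} ≤ ENNReal.ofReal (K * Real.exp (-t ^ r / L))) →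
    ∀ (A : Fin m → Fin n → ℝ) (p q : ℝ≥0∞), 1 ≤ p → 1 ≤ q →
    (∫⁻ ω, ENNReal.ofReal (opNorm p q (fun i j => A i j * X i j ω) ^ 2) ∂μ)
        ^ ((1 : ℝ) / 2) ≤
      ENNReal.ofReal (C * ((m + n : ℕ) : ℝ) ^ (1 / r) *
        Real.sqrt (opNorm (p / 2) (q / 2) (fun i j => A i j ^ 2))) := by
  refine ⟨√(rowSumConst r K L), Real.sqrt_pos.2 (rowSumConst_pos hr0 hK.le hL), ?_⟩
  intro Ω _ μ _ m n X hX hind _ _ htail A p q hp hq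
  have hp0 : p ≠ 0 := (zero_lt_one.trans_le hp).ne'
  have hq0 : q ≠ 0 := (zero_lt_one.trans_le hq).ne'
  set a := opNorm (p / 2) (q / 2) (fun i j => A i j ^ 2)
  set N : ℝ := ((m + n : ℕ) : ℝ)
  have ha : 0 ≤ a := opNorm_nonneg (by simp [hp0]) (by simp [hq0]) _
  have hκ := (rowSumConst_pos hr0 hK.le hL).le
  have hsecond : ∫⁻ ω, ENNReal.ofReal (opNorm p q (fun i j => A i j * X i j ω) ^ 2) ∂μ ≤
      ENNReal.ofReal (a * (rowSumConst r K L * N ^ (2 / r))) := by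
    rw [ENNReal.ofReal_mul ha]
    exact (lintegral_opNorm_mul_sq_le μ hp0 hq0 A X).trans
      (by gcongr; exact lintegral_iSup_rowSum_sq_le hr0 hr2 hK.le hL hX hind htail)
  refine (ENNReal.rpow_le_rpow hsecond (by norm_num)).trans_eq ?_
  rw [ENNReal.ofReal_rpow_of_nonneg (by positivity) (by norm_num), ← Real.sqrt_eq_rpow,
    Real.sqrt_mul ha, Real.sqrt_mul hκ, Real.sqrt_eq_rpow (N ^ (2 / r)),
    ← Real.rpow_mul (by positivity)]
  congr 1
  ring_nf
end
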